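/- arXiv:1410.5590 — 3 statements merged into one kernel-verified Lean document; each statement's English description precedes it below -/
import Mathlib

section
/- For any outward pointing field of arrows on A_{n+1}, the number r of repelling interior nodes and the number a of attracting interior nodes satisfy r − a = n + 1. -/
/-- A unit lattice square with lower-left corner `c` belongs to the Aztec diamond of
order `m` iff it intersects the open region `{(x,y) : |x|+|y| < m}`; equivalently the
distance-to-origin data of the cell satisfies this inequality. -/
def aztecCell (m : ℕ) (c : ℤ × ℤ) : Prop :=
  max c.1 (-c.1 - 1) + max c.2 (-c.2 - 1) < (m : ℤ)

instance (m : ℕ) : DecidablePred (aztecCell m) := fun c => by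
  unfold aztecCell; infer_instance

/-- Two unit lattice squares are adjacent (form a domino) iff they share a full edge. -/
def Adjacent (c d : ℤ × ℤ) : Prop :=
  (c.1 = d.1 ∧ |c.2 - d.2| = 1) ∨ (c.2 = d.2 ∧ |c.1 - d.1| = 1)

/-- A domino tiling of the Aztec diamond of order `m`, encoded as the involution
matching each unit square of the region with the other half of its domino,
and fixing everything outside the region. -/
def IsTiling (m : ℕ) (t : ℤ × ℤ → ℤ × ℤ) : Prop :=
  (∀ c, aztecCell m c → aztecCell m (t c) ∧ t (t c) = c ∧ Adjacent c (t c)) ∧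
  (∀ c, ¬ aztecCell m c → t c = c)

/-- `p` is a lattice point of the Aztec diamond of order `m` (a corner of one of its cells). -/
def aztecPoint (m : ℕ) (p : ℤ × ℤ) : Prop :=
  max (|p.1| - 1) 0 + max (|p.2| - 1) 0 < (m : ℤ)

instance (m : ℕ) : DecidablePred (aztecPoint m) := fun p => by
  unfold aztecPoint; infer_instance

/-- A node: a lattice point `(i,j)` of `A_{n+1}` with `i + j ≡ n (mod 2)`. -/
def IsNode (n : ℕ) (p : ℤ × ℤ) : Prop :=
  aztecPoint (n + 1) p ∧ (p.1 + p.2 - (n : ℤ)) % 2 = 0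

/-- An interior node: a node contained in `A_n`. -/
def InteriorNode (n : ℕ) (p : ℤ × ℤ) : Prop :=
  IsNode n p ∧ aztecPoint n p

/-- `p` is a corner of the unit square with lower-left corner `c`. -/
def SqCorner (c p : ℤ × ℤ) : Prop :=
  (p.1 = c.1 ∨ p.1 = c.1 + 1) ∧ (p.2 = c.2 ∨ p.2 = c.2 + 1)

instance (c p : ℤ × ℤ) : Decidable (SqCorner c p) := by
  unfold SqCorner; infer_instance

/-- The two corners of the lattice square `c` that are nodes; they are diagonally opposite. -/
def cellDiag (n : ℕ) (c : ℤ × ℤ) : (ℤ × ℤ) × (ℤ × ℤ) :=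
  if (c.1 + c.2 - (n : ℤ)) % 2 = 0 then (c, (c.1 + 1, c.2 + 1))
  else ((c.1 + 1, c.2), (c.1, c.2 + 1))

/-- `A` assigns to each lattice square the head of its arrow.  An interior node `N` is
attracting if all four adjacent arrows point towards `N`. -/
def Attracting (A : ℤ × ℤ → ℤ × ℤ) (N : ℤ × ℤ) : Prop :=
  A (N.1 - 1, N.2 - 1) = N ∧ A (N.1, N.2 - 1) = N ∧ A (N.1 - 1, N.2) = N ∧ A N = N

/-- An interior node `N` is repelling if all four adjacent arrows point away from `N`
(towards the opposite corner of the respective square). -/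
def Repelling (A : ℤ × ℤ → ℤ × ℤ) (N : ℤ × ℤ) : Prop :=
  A (N.1 - 1, N.2 - 1) = (N.1 - 1, N.2 - 1) ∧ A (N.1, N.2 - 1) = (N.1 + 1, N.2 - 1) ∧
  A (N.1 - 1, N.2) = (N.1 - 1, N.2 + 1) ∧ A N = (N.1 + 1, N.2 + 1)

/-- An interior node `N` is transient if any two collinear arrows adjacent to `N`
point in the same direction. -/
def Transient (A : ℤ × ℤ → ℤ × ℤ) (N : ℤ × ℤ) : Prop :=
  ((A (N.1 - 1, N.2 - 1) = N) ↔ (A N = (N.1 + 1, N.2 + 1))) ∧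
  ((A (N.1, N.2 - 1) = N) ↔ (A (N.1 - 1, N.2) = (N.1 - 1, N.2 + 1)))

/-- A field of arrows on `A_{n+1}`: in each lattice square an arrow joining its two
corner nodes, such that every interior node is attracting, repelling or transient. -/
def IsArrowField (n : ℕ) (A : ℤ × ℤ → ℤ × ℤ) : Prop :=
  (∀ c, aztecCell (n + 1) c → A c = (cellDiag n c).1 ∨ A c = (cellDiag n c).2) ∧
  (∀ N, InteriorNode n N → Attracting A N ∨ Repelling A N ∨ Transient A N)

/-- A boundary square: a lattice square of `A_{n+1}` not contained in `A_n`. -/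
def BoundaryCell (n : ℕ) (c : ℤ × ℤ) : Prop := aztecCell (n + 1) c ∧ ¬ aztecCell n c

/-- The field points outward: in every boundary square the arrow points towards the
corner node on the boundary of `A_{n+1}` (i.e. not an interior node). -/
def Outward (n : ℕ) (A : ℤ × ℤ → ℤ × ℤ) : Prop :=
  ∀ c, BoundaryCell n c → ¬ aztecPoint n (A c)

/-- The field points inward: in every boundary square the arrow points towards the
interior node. -/
def Inward (n : ℕ) (A : ℤ × ℤ → ℤ × ℤ) : Prop :=
  ∀ c, BoundaryCell n c → aztecPoint n (A c)

/-- The number of repelling interior nodes of a field of arrows. -/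
noncomputable def repCount (n : ℕ) (A : ℤ × ℤ → ℤ × ℤ) : ℕ :=
  Set.ncard {N : ℤ × ℤ | InteriorNode n N ∧ Repelling A N}

/-- The field of arrows associated to a tiling: in each lattice square the arrow points
towards the corner node of the domino containing that square (the node corner of the
square which is not a corner of its partner square). -/
def tilingArrow (n : ℕ) (t : ℤ × ℤ → ℤ × ℤ) (c : ℤ × ℤ) : ℤ × ℤ :=
  if SqCorner (t c) (cellDiag n c).1 then (cellDiag n c).2 else (cellDiag n c).1

/-! Count, over all cells of `A_{n+1}`, the arrow endpoints at interior nodes: `+1` for an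
interior tail, `-1` for an interior head. An arrow inside `A_n` has both ends interior and
contributes `0`; each of the `4(n+1)` outward boundary arrows has an interior tail and an exterior
head, so contributes `1`. Grouped by nodes instead, the four arrows at a repelling node contribute
`4`, at an attracting node `-4`, and at a transient node `0`, since its two collinear pairs each
pass through it. Hence `4 (r - a) = 4 (n + 1)`. -/

instance (n : ℕ) : DecidablePred (InteriorNode n) := fun p => by
  unfold InteriorNode IsNode; infer_instance

instance (A : ℤ × ℤ → ℤ × ℤ) (N : ℤ × ℤ) : Decidable (Repelling A N) := by
  unfold Repelling; infer_instance

instance (A : ℤ × ℤ → ℤ × ℤ) (N : ℤ × ℤ) : Decidable (Attracting A N) := by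
  unfold Attracting; infer_instance

noncomputable def aztecCellFinset (m : ℕ) : Finset (ℤ × ℤ) :=
  (Finset.Icc (-(m : ℤ)) m ×ˢ Finset.Icc (-(m : ℤ)) m).filter (aztecCell m)

noncomputable def interiorNodeFinset (n : ℕ) : Finset (ℤ × ℤ) :=
  (Finset.Icc (-(n : ℤ)) n ×ˢ Finset.Icc (-(n : ℤ)) n).filter (InteriorNode n)

theorem mem_aztecCellFinset {m : ℕ} {c : ℤ × ℤ} : c ∈ aztecCellFinset m ↔ aztecCell m c := by
  simp only [aztecCellFinset, aztecCell, Finset.mem_filter, Finset.mem_product, Finset.mem_Icc]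
  omega

theorem mem_interiorNodeFinset {n : ℕ} {p : ℤ × ℤ} :
    p ∈ interiorNodeFinset n ↔ InteriorNode n p := by
  simp only [interiorNodeFinset, InteriorNode, IsNode, aztecPoint, abs_eq_max_neg,
    Finset.mem_filter, Finset.mem_product, Finset.mem_Icc]
  omega

theorem coe_filter_interiorNodeFinset (n : ℕ) (p : ℤ × ℤ → Prop) [DecidablePred p] :
    ↑((interiorNodeFinset n).filter p) = {N : ℤ × ℤ | InteriorNode n N ∧ p N} := by
  ext N
  simp [mem_interiorNodeFinset]

theorem card_boundaryCells (m : ℕ) :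
    ((aztecCellFinset (m + 1)).filter (fun c => ¬ aztecCell m c)).card = 4 * (m + 1) := by
  -- `mirror` inverts the folding `x ↦ max x (-x - 1)` of `aztecCell`; a boundary cell of
  -- `A_{m+1}` is one whose folded coordinates are `(k, m - k)` with `k ≤ m`.
  let mirror : Bool → ℤ → ℤ := fun b x => if b then -x - 1 else x
  let g : ℕ × Bool × Bool → ℤ × ℤ := fun x => (mirror x.2.1 x.1, mirror x.2.2 (m - x.1))
  have himage : (aztecCellFinset (m + 1)).filter (fun c => ¬ aztecCell m c) =
      (Finset.range (m + 1) ×ˢ Finset.univ).image g := by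
    ext c
    simp only [Finset.mem_filter, mem_aztecCellFinset, Finset.mem_image, Finset.mem_product,
      Finset.mem_range, Finset.mem_univ, and_true]
    constructor
    · rintro ⟨h1, h2⟩
      unfold aztecCell at h1 h2
      refine ⟨((max c.1 (-c.1 - 1)).toNat, decide (c.1 < 0), decide (c.2 < 0)), by omega, ?_⟩
      simp only [g, mirror, Prod.ext_iff, decide_eq_true_eq]
      constructor <;> split_ifs <;> omega
    · rintro ⟨⟨k, s, t⟩, hk, rfl⟩
      simp only [g, mirror, aztecCell]
      cases s <;> cases t <;> simp <;> omega
  have hinj :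
      Set.InjOn g (Finset.range (m + 1) ×ˢ (Finset.univ : Finset (Bool × Bool)) : Finset _) := by
    rintro ⟨k, s, t⟩ hk ⟨k', s', t'⟩ hk' h
    simp only [Finset.coe_product, Set.mem_prod, Finset.mem_coe, Finset.mem_range] at hk hk'
    simp only [g, mirror, Prod.ext_iff] at h ⊢
    cases s <;> cases t <;> cases s' <;> cases t' <;> simp at h ⊢ <;> omega
  rw [himage, Finset.card_image_of_injOn hinj, Finset.card_product, Finset.card_range,
    Finset.card_univ, Fintype.card_prod, Fintype.card_bool]
  ring

theorem cellDiag_fst_ne_snd (n : ℕ) (c : ℤ × ℤ) : (cellDiag n c).1 ≠ (cellDiag n c).2 := by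
  unfold cellDiag
  split <;> simp [Prod.ext_iff]

theorem cellDiag_interior_of_aztecCell {n : ℕ} {c : ℤ × ℤ} (h : aztecCell n c) :
    InteriorNode n (cellDiag n c).1 ∧ InteriorNode n (cellDiag n c).2 := by
  unfold aztecCell at h
  unfold cellDiag
  split <;> simp only [InteriorNode, IsNode, aztecPoint, abs_eq_max_neg] <;> push_cast <;> omega

theorem cellDiag_interior_of_boundaryCell {n : ℕ} (hn : 1 ≤ n) {c : ℤ × ℤ}
    (h : BoundaryCell n c) :
    InteriorNode n (cellDiag n c).1 ∨ InteriorNode n (cellDiag n c).2 := by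
  obtain ⟨h1, h2⟩ := h
  unfold aztecCell at h1 h2
  unfold cellDiag
  split <;> simp only [InteriorNode, IsNode, aztecPoint, abs_eq_max_neg] <;> push_cast at * <;>
    omega

def nodeCells (N : ℤ × ℤ) : Finset (ℤ × ℤ) :=
  {(N.1 - 1, N.2 - 1), (N.1, N.2 - 1), (N.1 - 1, N.2), N}

theorem mem_nodeCells_of_mem_cellDiag {n : ℕ} {c N : ℤ × ℤ}
    (h : (cellDiag n c).1 = N ∨ (cellDiag n c).2 = N) : c ∈ nodeCells N := by
  simp only [nodeCells, Finset.mem_insert, Finset.mem_singleton]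
  unfold cellDiag at h
  split at h <;> simp only [Prod.ext_iff] at h ⊢ <;> omega

theorem nodeCells_subset_aztecCellFinset {n : ℕ} {N : ℤ × ℤ} (hN : InteriorNode n N) :
    nodeCells N ⊆ aztecCellFinset (n + 1) := by
  obtain ⟨⟨-, hpar⟩, h⟩ := hN
  simp only [aztecPoint, abs_eq_max_neg] at h
  intro c hc
  simp only [nodeCells, Finset.mem_insert, Finset.mem_singleton] at hc
  rw [mem_aztecCellFinset]
  rcases hc with rfl | rfl | rfl | rfl <;> unfold aztecCell <;> push_cast <;> omega

theorem cellDiag_nodeCells {n : ℕ} {N : ℤ × ℤ} (hpar : (N.1 + N.2 - (n : ℤ)) % 2 = 0) :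
    cellDiag n (N.1 - 1, N.2 - 1) = ((N.1 - 1, N.2 - 1), N) ∧
      cellDiag n (N.1, N.2 - 1) = ((N.1 + 1, N.2 - 1), N) ∧
      cellDiag n (N.1 - 1, N.2) = (N, (N.1 - 1, N.2 + 1)) ∧
      cellDiag n N = (N, (N.1 + 1, N.2 + 1)) := by
  simp only [cellDiag]
  refine ⟨?_, ?_, ?_, ?_⟩ <;> split_ifs <;> simp only [Prod.ext_iff, true_and, and_true] <;> omega

def arrowTail (n : ℕ) (A : ℤ × ℤ → ℤ × ℤ) (c : ℤ × ℤ) : ℤ × ℤ :=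
  if A c = (cellDiag n c).1 then (cellDiag n c).2 else (cellDiag n c).1

def netOutflow (n : ℕ) (A : ℤ × ℤ → ℤ × ℤ) (N c : ℤ × ℤ) : ℤ :=
  (if arrowTail n A c = N then 1 else 0) - (if A c = N then 1 else 0)

theorem netOutflow_eq {n : ℕ} {A : ℤ × ℤ → ℤ × ℤ} {c : ℤ × ℤ}
    (hc : A c = (cellDiag n c).1 ∨ A c = (cellDiag n c).2) (N : ℤ × ℤ) :
    netOutflow n A N c =
      if (cellDiag n c).1 = N ∨ (cellDiag n c).2 = N then (if A c = N then -1 else 1) else 0 := by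
  have hne := cellDiag_fst_ne_snd n c
  unfold netOutflow arrowTail
  rcases hc with h | h <;> rw [h] <;> by_cases h1 : (cellDiag n c).1 = N <;>
    by_cases h2 : (cellDiag n c).2 = N <;> simp_all

theorem sum_netOutflow_interiorNodeFinset (n : ℕ) (A : ℤ × ℤ → ℤ × ℤ) (c : ℤ × ℤ) :
    ∑ N ∈ interiorNodeFinset n, netOutflow n A N c =
      (if InteriorNode n (arrowTail n A c) then 1 else 0) -
        (if InteriorNode n (A c) then 1 else 0) := by
  simp only [netOutflow, Finset.sum_sub_distrib, Finset.sum_ite_eq, mem_interiorNodeFinset]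

theorem arrowTail_of_eq_fst {n : ℕ} {A : ℤ × ℤ → ℤ × ℤ} {c : ℤ × ℤ}
    (h : A c = (cellDiag n c).1) : arrowTail n A c = (cellDiag n c).2 := if_pos h

theorem arrowTail_of_eq_snd {n : ℕ} {A : ℤ × ℤ → ℤ × ℤ} {c : ℤ × ℤ}
    (h : A c = (cellDiag n c).2) : arrowTail n A c = (cellDiag n c).1 :=
  if_neg (h ▸ (cellDiag_fst_ne_snd n c).symm)

theorem sum_netOutflow_eq_zero_of_aztecCell {n : ℕ} {A : ℤ × ℤ → ℤ × ℤ} {c : ℤ × ℤ}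
    (hc : A c = (cellDiag n c).1 ∨ A c = (cellDiag n c).2) (h : aztecCell n c) :
    ∑ N ∈ interiorNodeFinset n, netOutflow n A N c = 0 := by
  obtain ⟨h1, h2⟩ := cellDiag_interior_of_aztecCell h
  rw [sum_netOutflow_interiorNodeFinset]
  rcases hc with hc | hc
  · rw [arrowTail_of_eq_fst hc, hc, if_pos h1, if_pos h2, sub_self]
  · rw [arrowTail_of_eq_snd hc, hc, if_pos h1, if_pos h2, sub_self]

theorem sum_netOutflow_eq_one_of_boundaryCell {n : ℕ} (hn : 1 ≤ n) {A : ℤ × ℤ → ℤ × ℤ}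
    {c : ℤ × ℤ} (hc : A c = (cellDiag n c).1 ∨ A c = (cellDiag n c).2) (h : BoundaryCell n c)
    (hout : ¬ aztecPoint n (A c)) :
    ∑ N ∈ interiorNodeFinset n, netOutflow n A N c = 1 := by
  have hhead : ¬ InteriorNode n (A c) := fun h => hout h.2
  suffices htail : InteriorNode n (arrowTail n A c) by
    rw [sum_netOutflow_interiorNodeFinset, if_pos htail, if_neg hhead, sub_zero]
  rcases cellDiag_interior_of_boundaryCell hn h with hi | hi <;> rcases hc with hc | hc
  · exact absurd (hc ▸ hi) hhead
  · rwa [arrowTail_of_eq_snd hc]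
  · rwa [arrowTail_of_eq_fst hc]
  · exact absurd (hc ▸ hi) hhead

theorem sum_netOutflow_eq_sum_nodeCells {n : ℕ} {A : ℤ × ℤ → ℤ × ℤ} (hA : IsArrowField n A)
    {N : ℤ × ℤ} (hN : InteriorNode n N) :
    ∑ c ∈ aztecCellFinset (n + 1), netOutflow n A N c = ∑ c ∈ nodeCells N, netOutflow n A N c := by
  refine (Finset.sum_subset (nodeCells_subset_aztecCellFinset hN) fun c hc hcN => ?_).symm
  rw [netOutflow_eq (hA.1 c (mem_aztecCellFinset.1 hc)), if_neg]
  exact fun h => hcN (mem_nodeCells_of_mem_cellDiag h)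

theorem sum_nodeCells_netOutflow {n : ℕ} {A : ℤ × ℤ → ℤ × ℤ} (hA : IsArrowField n A)
    {N : ℤ × ℤ} (hN : InteriorNode n N) :
    ∑ c ∈ nodeCells N, netOutflow n A N c =
      (if Repelling A N then 4 else 0) - (if Attracting A N then 4 else 0) := by
  have hcells := nodeCells_subset_aztecCellFinset hN
  simp only [nodeCells, Finset.insert_subset_iff, Finset.singleton_subset_iff,
    mem_aztecCellFinset] at hcells
  obtain ⟨h1, h2, h3, h4⟩ := hcells
  obtain ⟨hd1, hd2, hd3, hd4⟩ := cellDiag_nodeCells hN.1.2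
  have v1 := hA.1 _ h1
  have v2 := hA.1 _ h2
  have v3 := hA.1 _ h3
  have v4 := hA.1 _ h4
  rw [nodeCells, Finset.sum_insert (by simp [Prod.ext_iff]),
    Finset.sum_insert (by simp [Prod.ext_iff]), Finset.sum_insert (by simp [Prod.ext_iff]),
    Finset.sum_singleton, netOutflow_eq v1, netOutflow_eq v2, netOutflow_eq v3, netOutflow_eq v4]
  have htype := hA.2 N hN
  -- Check the 16 orientations of the four arrows at `N`; the node condition excludes those that
  -- are neither attracting, repelling nor transient.
  simp only [hd1, hd2, hd3, hd4] at v1 v2 v3 v4 ⊢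
  simp only [Attracting, Repelling, Transient] at htype ⊢
  rcases v1 with v1 | v1 <;> rcases v2 with v2 | v2 <;> rcases v3 with v3 | v3 <;>
    rcases v4 with v4 | v4 <;> simp [v1, v2, v3, v4, Prod.ext_iff, eq_sub_iff_add_eq] at htype ⊢

theorem sum_aztecCellFinset_sum_netOutflow {n : ℕ} (hn : 1 ≤ n) {A : ℤ × ℤ → ℤ × ℤ}
    (hA : IsArrowField n A) (hout : Outward n A) :
    ∑ c ∈ aztecCellFinset (n + 1), ∑ N ∈ interiorNodeFinset n, netOutflow n A N c =
      4 * (n + 1) := by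
  have hinner : ∀ c ∈ (aztecCellFinset (n + 1)).filter (aztecCell n),
      ∑ N ∈ interiorNodeFinset n, netOutflow n A N c = 0 := fun c hc =>
    sum_netOutflow_eq_zero_of_aztecCell
      (hA.1 c (mem_aztecCellFinset.1 (Finset.mem_filter.1 hc).1)) (Finset.mem_filter.1 hc).2
  have hboundary : ∀ c ∈ (aztecCellFinset (n + 1)).filter (fun c => ¬ aztecCell n c),
      ∑ N ∈ interiorNodeFinset n, netOutflow n A N c = 1 := fun c hc => by
    obtain ⟨hc, hnot⟩ := Finset.mem_filter.1 hc
    have hbd : BoundaryCell n c := ⟨mem_aztecCellFinset.1 hc, hnot⟩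
    exact sum_netOutflow_eq_one_of_boundaryCell hn (hA.1 c hbd.1) hbd (hout c hbd)
  rw [← Finset.sum_filter_add_sum_filter_not _ (aztecCell n), Finset.sum_eq_zero hinner,
    Finset.sum_congr rfl hboundary, zero_add, Finset.sum_const, card_boundaryCells]
  ring

theorem sum_interiorNodeFinset_sum_netOutflow {n : ℕ} {A : ℤ × ℤ → ℤ × ℤ}
    (hA : IsArrowField n A) :
    ∑ N ∈ interiorNodeFinset n, ∑ c ∈ aztecCellFinset (n + 1), netOutflow n A N c =
      4 * ((interiorNodeFinset n).filter (Repelling A)).card -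
        4 * ((interiorNodeFinset n).filter (Attracting A)).card := by
  rw [Finset.sum_congr rfl fun N hN => by
    rw [sum_netOutflow_eq_sum_nodeCells hA (mem_interiorNodeFinset.1 hN),
      sum_nodeCells_netOutflow hA (mem_interiorNodeFinset.1 hN)]]
  simp only [Finset.sum_sub_distrib, ← Finset.sum_filter, Finset.sum_const, nsmul_eq_mul]
  ring

/-- For any outward pointing field of arrows on `A_{n+1}`, the number of repelling
interior nodes exceeds the number of attracting interior nodes by exactly `n+1`. -/
theorem repelling_minus_attracting (n : ℕ) (hn : 1 ≤ n) (A : ℤ × ℤ → ℤ × ℤ)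
    (hA : IsArrowField n A) (hout : Outward n A) :
    Set.ncard {N : ℤ × ℤ | InteriorNode n N ∧ Repelling A N} =
      Set.ncard {N : ℤ × ℤ | InteriorNode n N ∧ Attracting A N} + (n + 1) := by
  have hflux := sum_interiorNodeFinset_sum_netOutflow hA
  rw [Finset.sum_comm, sum_aztecCellFinset_sum_netOutflow hn hA hout] at hflux
  rw [← coe_filter_interiorNodeFinset, ← coe_filter_interiorNodeFinset, Set.ncard_coe_finset,
    Set.ncard_coe_finset]
  omega
end

section
/- Given an outward pointing field of arrows F on A_{n+1} with r(F) repelling nodes, there are exactly 2^{r(F)} domino tilings T of A_{n+1} whose associated field of arrows equals F. -/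
private lemma iabs (x : ℤ) : |x| = max x (-x) := rfl

lemma aztecCell_iff (m : ℕ) (c : ℤ × ℤ) : aztecCell m c ↔
    c.1 + c.2 < (m:ℤ) ∧ c.1 - c.2 < (m:ℤ) + 1 ∧ c.2 - c.1 < (m:ℤ) + 1 ∧
      -c.1 - c.2 < (m:ℤ) + 2 := by
  unfold aztecCell; omega

lemma aztecPoint_iff (m : ℕ) (p : ℤ × ℤ) : aztecPoint m p ↔
    0 < (m:ℤ) ∧ p.1 + p.2 < (m:ℤ) + 2 ∧ p.1 - p.2 < (m:ℤ) + 2 ∧ p.2 - p.1 < (m:ℤ) + 2 ∧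
      -p.1 - p.2 < (m:ℤ) + 2 ∧ p.1 < (m:ℤ) + 1 ∧ -p.1 < (m:ℤ) + 1 ∧
      p.2 < (m:ℤ) + 1 ∧ -p.2 < (m:ℤ) + 1 := by
  unfold aztecPoint; simp only [iabs]; omega

lemma adjacent_iff (c d : ℤ × ℤ) : Adjacent c d ↔
    (c.1 = d.1 ∧ (c.2 = d.2 + 1 ∨ d.2 = c.2 + 1)) ∨
    (c.2 = d.2 ∧ (c.1 = d.1 + 1 ∨ d.1 = c.1 + 1)) := by
  unfold Adjacent; simp only [iabs]; omega

lemma sqCorner_iff (c p : ℤ × ℤ) : SqCorner c p ↔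
    (p.1 = c.1 ∨ p.1 = c.1 + 1) ∧ (p.2 = c.2 ∨ p.2 = c.2 + 1) := Iff.rfl

lemma cellDiag_pos {n : ℕ} {c : ℤ × ℤ} (h : (c.1 + c.2 - (n:ℤ)) % 2 = 0) :
    cellDiag n c = (c, (c.1 + 1, c.2 + 1)) := by rw [cellDiag, if_pos h]

lemma cellDiag_neg {n : ℕ} {c : ℤ × ℤ} (h : ¬ (c.1 + c.2 - (n:ℤ)) % 2 = 0) :
    cellDiag n c = ((c.1 + 1, c.2), (c.1, c.2 + 1)) := by rw [cellDiag, if_neg h]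

/-- The tail node of the arrow in cell `c`. -/
def tailOf (n : ℕ) (A : ℤ × ℤ → ℤ × ℤ) (c : ℤ × ℤ) : ℤ × ℤ :=
  if A c = (cellDiag n c).1 then (cellDiag n c).2 else (cellDiag n c).1

/-- Horizontal partner of cell `c` around node `Q`. -/
def hNb (c Q : ℤ × ℤ) : ℤ × ℤ := (2 * Q.1 - 1 - c.1, c.2)

/-- Vertical partner of cell `c` around node `Q`. -/
def vNb (c Q : ℤ × ℤ) : ℤ × ℤ := (c.1, 2 * Q.2 - 1 - c.2)

/-- All four cells around an interior node lie in the region. -/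
lemma nodeCell {n : ℕ} {Q : ℤ × ℤ} (hQ : InteriorNode n Q) (c : ℤ × ℤ)
    (h1 : c.1 = Q.1 ∨ c.1 = Q.1 - 1) (h2 : c.2 = Q.2 ∨ c.2 = Q.2 - 1) :
    aztecCell (n + 1) c := by
  obtain ⟨⟨hp, hpar⟩, hq⟩ := hQ
  rw [aztecPoint_iff] at hp hq
  rw [aztecCell_iff]
  push_cast at *
  omega

lemma cellDiag_pos_fst {n : ℕ} {c : ℤ × ℤ} (h : (c.1 + c.2 - (n:ℤ)) % 2 = 0) :
    (cellDiag n c).1 = c := by rw [cellDiag_pos h]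

lemma cellDiag_pos_snd {n : ℕ} {c : ℤ × ℤ} (h : (c.1 + c.2 - (n:ℤ)) % 2 = 0) :
    (cellDiag n c).2 = (c.1 + 1, c.2 + 1) := by rw [cellDiag_pos h]

lemma cellDiag_neg_fst {n : ℕ} {c : ℤ × ℤ} (h : ¬ (c.1 + c.2 - (n:ℤ)) % 2 = 0) :
    (cellDiag n c).1 = (c.1 + 1, c.2) := by rw [cellDiag_neg h]

lemma cellDiag_neg_snd {n : ℕ} {c : ℤ × ℤ} (h : ¬ (c.1 + c.2 - (n:ℤ)) % 2 = 0) :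
    (cellDiag n c).2 = (c.1, c.2 + 1) := by rw [cellDiag_neg h]

lemma cell_data {n : ℕ} (hn : 1 ≤ n) {A : ℤ × ℤ → ℤ × ℤ} (hA : IsArrowField n A)
    (hout : Outward n A) {c : ℤ × ℤ} (hc : aztecCell (n + 1) c) :
    InteriorNode n (tailOf n A c) ∧
    A c = (2 * c.1 + 1 - (tailOf n A c).1, 2 * c.2 + 1 - (tailOf n A c).2) ∧
    (c.1 = (tailOf n A c).1 ∨ c.1 = (tailOf n A c).1 - 1) ∧
    (c.2 = (tailOf n A c).2 ∨ c.2 = (tailOf n A c).2 - 1) := by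
  have hd := hA.1 c hc
  have hbd : ¬ aztecCell n c → ¬ aztecPoint n (A c) := fun h => hout c ⟨hc, h⟩
  clear hout hA
  unfold tailOf
  by_cases hp : (c.1 + c.2 - (n:ℤ)) % 2 = 0
  · rw [cellDiag_pos_fst hp, cellDiag_pos_snd hp] at hd ⊢
    rcases hd with h | h
    · rw [if_pos h]
      by_cases hcn : aztecCell n c
      · clear hbd
        simp only [h, InteriorNode, IsNode, aztecPoint_iff, aztecCell_iff, Prod.mk.injEq,
          Prod.ext_iff, true_or, or_true, and_true, true_and] at hc hcn ⊢
        push_cast at *; omega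
      · have hb := hbd hcn; rw [h] at hb; clear hbd
        simp only [h, InteriorNode, IsNode, aztecPoint_iff, aztecCell_iff, Prod.mk.injEq,
          Prod.ext_iff, true_or, or_true, and_true, true_and] at hc hcn hb ⊢
        push_cast at *; omega
    · rw [if_neg (by rw [h, Prod.ext_iff]; dsimp only; omega)]
      by_cases hcn : aztecCell n c
      · clear hbd
        simp only [h, InteriorNode, IsNode, aztecPoint_iff, aztecCell_iff, Prod.mk.injEq,
          Prod.ext_iff, true_or, or_true, and_true, true_and] at hc hcn ⊢
        push_cast at *; omega
      · have hb := hbd hcn; rw [h] at hb; clear hbd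
        simp only [h, InteriorNode, IsNode, aztecPoint_iff, aztecCell_iff, Prod.mk.injEq,
          Prod.ext_iff, true_or, or_true, and_true, true_and] at hc hcn hb ⊢
        push_cast at *; omega
  · rw [cellDiag_neg_fst hp, cellDiag_neg_snd hp] at hd ⊢
    rcases hd with h | h
    · rw [if_pos h]
      by_cases hcn : aztecCell n c
      · clear hbd
        simp only [h, InteriorNode, IsNode, aztecPoint_iff, aztecCell_iff, Prod.mk.injEq,
          Prod.ext_iff, true_or, or_true, and_true, true_and] at hc hcn ⊢
        push_cast at *; omega
      · have hb := hbd hcn; rw [h] at hb; clear hbd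
        simp only [h, InteriorNode, IsNode, aztecPoint_iff, aztecCell_iff, Prod.mk.injEq,
          Prod.ext_iff, true_or, or_true, and_true, true_and] at hc hcn hb ⊢
        push_cast at *; omega
    · rw [if_neg (by rw [h, Prod.ext_iff]; dsimp only; omega)]
      by_cases hcn : aztecCell n c
      · clear hbd
        simp only [h, InteriorNode, IsNode, aztecPoint_iff, aztecCell_iff, Prod.mk.injEq,
          Prod.ext_iff, true_or, or_true, and_true, true_and] at hc hcn ⊢
        push_cast at *; omega
      · have hb := hbd hcn; rw [h] at hb; clear hbd
        simp only [h, InteriorNode, IsNode, aztecPoint_iff, aztecCell_iff, Prod.mk.injEq,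
          Prod.ext_iff, true_or, or_true, and_true, true_and] at hc hcn hb ⊢
        push_cast at *; omega


lemma around {n : ℕ} {A : ℤ × ℤ → ℤ × ℤ} (hA : IsArrowField n A) {Q : ℤ × ℤ}
    (hQ : InteriorNode n Q) :
    (tailOf n A (Q.1 - 1, Q.2 - 1) = Q ↔ A (Q.1 - 1, Q.2 - 1) = (Q.1 - 1, Q.2 - 1)) ∧
    (tailOf n A (Q.1, Q.2 - 1) = Q ↔ A (Q.1, Q.2 - 1) = (Q.1 + 1, Q.2 - 1)) ∧
    (tailOf n A Q = Q ↔ A Q = (Q.1 + 1, Q.2 + 1)) ∧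
    (tailOf n A (Q.1 - 1, Q.2) = Q ↔ A (Q.1 - 1, Q.2) = (Q.1 - 1, Q.2 + 1)) := by
  have hpar := hQ.1.2
  refine ⟨?_, ?_, ?_, ?_⟩
  · unfold tailOf
    simp only [cellDiag_pos_fst (n := n) (c := ((Q.1 - 1, Q.2 - 1) : ℤ × ℤ)) (by (try dsimp only); omega),
      cellDiag_pos_snd (n := n) (c := ((Q.1 - 1, Q.2 - 1) : ℤ × ℤ)) (by (try dsimp only); omega)]
    split_ifs with hif
    · exact iff_of_true (by rw [Prod.ext_iff]; dsimp only; omega) hif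
    · exact iff_of_false (by rw [Prod.ext_iff]; dsimp only; omega) hif
  · unfold tailOf
    simp only [cellDiag_neg_fst (n := n) (c := ((Q.1, Q.2 - 1) : ℤ × ℤ)) (by (try dsimp only); omega),
      cellDiag_neg_snd (n := n) (c := ((Q.1, Q.2 - 1) : ℤ × ℤ)) (by (try dsimp only); omega)]
    split_ifs with hif
    · exact iff_of_true (by rw [Prod.ext_iff]; dsimp only; omega) hif
    · exact iff_of_false (by rw [Prod.ext_iff]; dsimp only; omega) hif
  · have hc2 : aztecCell (n + 1) Q := nodeCell hQ Q (Or.inl rfl) (Or.inl rfl)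
    unfold tailOf
    simp only [cellDiag_pos_fst (n := n) (c := Q) hpar, cellDiag_pos_snd (n := n) (c := Q) hpar]
    split_ifs with hif
    · refine iff_of_false (by rw [Prod.ext_iff]; dsimp only; omega) ?_
      intro hh; rw [hif] at hh; rw [Prod.ext_iff] at hh; dsimp only at hh; omega
    · refine iff_of_true rfl ?_
      rcases hA.1 Q hc2 with h | h
      · rw [cellDiag_pos_fst (n := n) (c := Q) hpar] at h; exact absurd h hif
      · rw [cellDiag_pos_snd (n := n) (c := Q) hpar] at h; exact h
  · have hc3 : aztecCell (n + 1) (Q.1 - 1, Q.2) :=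
      nodeCell hQ _ (by (try dsimp only); omega) (by (try dsimp only); omega)
    unfold tailOf
    simp only [cellDiag_neg_fst (n := n) (c := ((Q.1 - 1, Q.2) : ℤ × ℤ)) (by (try dsimp only); omega),
      cellDiag_neg_snd (n := n) (c := ((Q.1 - 1, Q.2) : ℤ × ℤ)) (by (try dsimp only); omega)]
    split_ifs with hif
    · refine iff_of_false (by rw [Prod.ext_iff]; dsimp only; omega) ?_
      intro hh; rw [hif] at hh; rw [Prod.ext_iff] at hh; dsimp only at hh; omega
    · refine iff_of_true (by rw [Prod.ext_iff]; dsimp only; omega) ?_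
      rcases hA.1 _ hc3 with h | h
      · rw [cellDiag_neg_fst (n := n) (c := ((Q.1 - 1, Q.2) : ℤ × ℤ)) (by (try dsimp only); omega)] at h
        exact absurd h hif
      · rw [cellDiag_neg_snd (n := n) (c := ((Q.1 - 1, Q.2) : ℤ × ℤ)) (by (try dsimp only); omega)] at h
        exact h

lemma trichotomy {n : ℕ} {A : ℤ × ℤ → ℤ × ℤ} (hA : IsArrowField n A) {Q : ℤ × ℤ}
    (hQ : InteriorNode n Q) :
    (Repelling A Q ∧ tailOf n A (Q.1 - 1, Q.2 - 1) = Q ∧ tailOf n A (Q.1, Q.2 - 1) = Q ∧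
      tailOf n A Q = Q ∧ tailOf n A (Q.1 - 1, Q.2) = Q) ∨
    ((tailOf n A (Q.1 - 1, Q.2 - 1) = Q ↔ ¬ tailOf n A Q = Q) ∧
      (tailOf n A (Q.1, Q.2 - 1) = Q ↔ ¬ tailOf n A (Q.1 - 1, Q.2) = Q)) ∨
    (¬ tailOf n A (Q.1 - 1, Q.2 - 1) = Q ∧ ¬ tailOf n A (Q.1, Q.2 - 1) = Q ∧
      ¬ tailOf n A Q = Q ∧ ¬ tailOf n A (Q.1 - 1, Q.2) = Q) := by
  obtain ⟨i0, i1, i2, i3⟩ := around hA hQ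
  have hpar := hQ.1.2
  have hc0 : aztecCell (n + 1) (Q.1 - 1, Q.2 - 1) :=
    nodeCell hQ _ (by (try dsimp only); omega) (by (try dsimp only); omega)
  have hc1 : aztecCell (n + 1) (Q.1, Q.2 - 1) :=
    nodeCell hQ _ (by (try dsimp only); omega) (by (try dsimp only); omega)
  -- dichotomies at c0 and c1, with second alternative rewritten to `= Q`
  have ha0 : A (Q.1 - 1, Q.2 - 1) = (Q.1 - 1, Q.2 - 1) ∨ A (Q.1 - 1, Q.2 - 1) = Q := by
    rcases hA.1 _ hc0 with h | h
    · left; rw [cellDiag_pos_fst (n := n) (c := ((Q.1 - 1, Q.2 - 1) : ℤ × ℤ)) (by (try dsimp only); omega)] at h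
      exact h
    · right; rw [cellDiag_pos_snd (n := n) (c := ((Q.1 - 1, Q.2 - 1) : ℤ × ℤ)) (by (try dsimp only); omega)] at h
      rw [h, Prod.ext_iff]; dsimp only; omega
  have ha1 : A (Q.1, Q.2 - 1) = (Q.1 + 1, Q.2 - 1) ∨ A (Q.1, Q.2 - 1) = Q := by
    rcases hA.1 _ hc1 with h | h
    · left; rw [cellDiag_neg_fst (n := n) (c := ((Q.1, Q.2 - 1) : ℤ × ℤ)) (by (try dsimp only); omega)] at h
      exact h
    · right; rw [cellDiag_neg_snd (n := n) (c := ((Q.1, Q.2 - 1) : ℤ × ℤ)) (by (try dsimp only); omega)] at h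
      rw [h, Prod.ext_iff]; dsimp only; omega
  rcases hA.2 Q hQ with hat | hrep | htr
  · obtain ⟨h0, h1, h3, h2⟩ := hat
    refine Or.inr (Or.inr ⟨?_, ?_, ?_, ?_⟩)
    · rw [i0, h0, Prod.ext_iff]; dsimp only; omega
    · rw [i1, h1, Prod.ext_iff]; dsimp only; omega
    · rw [i2, h2, Prod.ext_iff]; dsimp only; omega
    · rw [i3, h3, Prod.ext_iff]; dsimp only; omega
  · obtain ⟨h0, h1, h3, h2⟩ := hrep
    exact Or.inl ⟨⟨h0, h1, h3, h2⟩, i0.mpr h0, i1.mpr h1, i2.mpr h2, i3.mpr h3⟩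
  · obtain ⟨ht1, ht2⟩ := htr
    refine Or.inr (Or.inl ⟨?_, ?_⟩)
    · rw [i0, i2, ← ht1]
      constructor
      · intro h hh; rw [h, Prod.ext_iff] at hh; dsimp only at hh; omega
      · intro h; rcases ha0 with h' | h'
        · exact h'
        · exact absurd h' h
    · rw [i1, i3, ← ht2]
      constructor
      · intro h hh; rw [h, Prod.ext_iff] at hh; dsimp only at hh; omega
      · intro h; rcases ha1 with h' | h'
        · exact h'
        · exact absurd h' h


/-- In the four cells around a repelling interior node, every tail is at the node. -/
lemma rep_allT {n : ℕ} {A : ℤ × ℤ → ℤ × ℤ} (hA : IsArrowField n A) {Q : ℤ × ℤ}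
    (hQ : InteriorNode n Q) (hrep : Repelling A Q) :
    ∀ e : ℤ × ℤ, (e.1 = Q.1 ∨ e.1 = Q.1 - 1) → (e.2 = Q.2 ∨ e.2 = Q.2 - 1) →
      tailOf n A e = Q := by
  obtain ⟨i0, i1, i2, i3⟩ := around hA hQ
  obtain ⟨h0, h1, h3, h2⟩ := hrep
  rintro ⟨x, y⟩ (rfl | rfl) (rfl | rfl)
  · exact i2.mpr h2
  · exact i1.mpr h1
  · exact i3.mpr h3
  · exact i0.mpr h0

lemma trichotomy' {n : ℕ} {A : ℤ × ℤ → ℤ × ℤ} (hA : IsArrowField n A) {Q : ℤ × ℤ}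
    (hQ : InteriorNode n Q) :
    (Repelling A Q ∧ ∀ e : ℤ × ℤ, (e.1 = Q.1 ∨ e.1 = Q.1 - 1) →
        (e.2 = Q.2 ∨ e.2 = Q.2 - 1) → tailOf n A e = Q) ∨
    (∀ e : ℤ × ℤ, (e.1 = Q.1 ∨ e.1 = Q.1 - 1) → (e.2 = Q.2 ∨ e.2 = Q.2 - 1) →
        (tailOf n A e = Q ↔ ¬ tailOf n A (2 * Q.1 - 1 - e.1, 2 * Q.2 - 1 - e.2) = Q)) ∨
    (∀ e : ℤ × ℤ, (e.1 = Q.1 ∨ e.1 = Q.1 - 1) → (e.2 = Q.2 ∨ e.2 = Q.2 - 1) →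
        ¬ tailOf n A e = Q) := by
  rcases trichotomy hA hQ with ⟨hrep, _⟩ | ⟨e1, e2⟩ | ⟨t0, t1, t2, t3⟩
  · exact Or.inl ⟨hrep, rep_allT hA hQ hrep⟩
  · refine Or.inr (Or.inl ?_)
    rintro ⟨x, y⟩ (rfl | rfl) (rfl | rfl)
    · rw [show ((2 * Q.1 - 1 - Q.1, 2 * Q.2 - 1 - Q.2) : ℤ × ℤ) = (Q.1 - 1, Q.2 - 1) from by
        rw [Prod.ext_iff]; dsimp only; omega]
      show tailOf n A Q = Q ↔ ¬ tailOf n A (Q.1 - 1, Q.2 - 1) = Q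
      tauto
    · rw [show ((2 * Q.1 - 1 - Q.1, 2 * Q.2 - 1 - (Q.2 - 1)) : ℤ × ℤ) = (Q.1 - 1, Q.2) from by
        rw [Prod.ext_iff]; dsimp only; omega]
      tauto
    · rw [show ((2 * Q.1 - 1 - (Q.1 - 1), 2 * Q.2 - 1 - Q.2) : ℤ × ℤ) = (Q.1, Q.2 - 1) from by
        rw [Prod.ext_iff]; dsimp only; omega]
      show tailOf n A (Q.1 - 1, Q.2) = Q ↔ ¬ tailOf n A (Q.1, Q.2 - 1) = Q
      tauto
    · rw [show ((2 * Q.1 - 1 - (Q.1 - 1), 2 * Q.2 - 1 - (Q.2 - 1)) : ℤ × ℤ) = (Q.1, Q.2) from by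
        rw [Prod.ext_iff]; dsimp only; omega]
      show tailOf n A (Q.1 - 1, Q.2 - 1) = Q ↔ ¬ tailOf n A Q = Q
      tauto
  · refine Or.inr (Or.inr ?_)
    rintro ⟨x, y⟩ (rfl | rfl) (rfl | rfl)
    · exact t2
    · exact t1
    · exact t3
    · exact t0

/-- The tiling determined by the arrow field `A` and a choice function `s` (used at
repelling nodes to decide between the horizontal and the vertical pairing). -/
def tS (n : ℕ) (A : ℤ × ℤ → ℤ × ℤ) (s : ℤ × ℤ → Bool) (c : ℤ × ℤ) : ℤ × ℤ :=
  if aztecCell (n + 1) c then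
    if tailOf n A (hNb c (tailOf n A c)) = tailOf n A c ∧
        tailOf n A (vNb c (tailOf n A c)) = tailOf n A c then
      (if s (tailOf n A c) then hNb c (tailOf n A c) else vNb c (tailOf n A c))
    else if tailOf n A (hNb c (tailOf n A c)) = tailOf n A c then hNb c (tailOf n A c)
    else vNb c (tailOf n A c)
  else c

lemma tS_mem {n : ℕ} (hn : 1 ≤ n) {A : ℤ × ℤ → ℤ × ℤ} (hA : IsArrowField n A)
    (hout : Outward n A) (s : ℤ × ℤ → Bool) {c : ℤ × ℤ} (hc : aztecCell (n + 1) c) :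
    tailOf n A (tS n A s c) = tailOf n A c ∧
    (tS n A s c = hNb c (tailOf n A c) ∨ tS n A s c = vNb c (tailOf n A c)) := by
  obtain ⟨hQ, hrel, hb1, hb2⟩ := cell_data hn hA hout hc
  unfold tS
  rw [if_pos hc]
  by_cases hb : tailOf n A (hNb c (tailOf n A c)) = tailOf n A c ∧
      tailOf n A (vNb c (tailOf n A c)) = tailOf n A c
  · rw [if_pos hb]
    by_cases hs : s (tailOf n A c)
    · rw [if_pos hs]; exact ⟨hb.1, Or.inl rfl⟩
    · rw [if_neg hs]; exact ⟨hb.2, Or.inr rfl⟩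
  · rw [if_neg hb]
    by_cases hh : tailOf n A (hNb c (tailOf n A c)) = tailOf n A c
    · rw [if_pos hh]; exact ⟨hh, Or.inl rfl⟩
    · rw [if_neg hh]
      refine ⟨?_, Or.inr rfl⟩
      rcases trichotomy' hA hQ with ⟨_, hall⟩ | hiff | hnone
      · exact absurd (hall _ (by unfold hNb; dsimp only; omega)
          (by unfold hNb; dsimp only; omega)) hh
      · have hv := hiff (vNb c (tailOf n A c)) (by unfold vNb; dsimp only; omega)
          (by unfold vNb; dsimp only; omega)
        rw [show ((2 * (tailOf n A c).1 - 1 - (vNb c (tailOf n A c)).1,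
            2 * (tailOf n A c).2 - 1 - (vNb c (tailOf n A c)).2) : ℤ × ℤ)
            = hNb c (tailOf n A c) from by
          unfold hNb vNb; rw [Prod.ext_iff]; dsimp only; omega] at hv
        exact hv.mpr hh
      · exact absurd rfl (hnone c hb1 hb2)


lemma tS_eval {n : ℕ} (hn : 1 ≤ n) {A : ℤ × ℤ → ℤ × ℤ} (hA : IsArrowField n A)
    (hout : Outward n A) (s : ℤ × ℤ → Bool) {c Q : ℤ × ℤ} (hc : aztecCell (n + 1) c)
    (htc : tailOf n A c = Q)
    (hall : ∀ e : ℤ × ℤ, (e.1 = Q.1 ∨ e.1 = Q.1 - 1) → (e.2 = Q.2 ∨ e.2 = Q.2 - 1) →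
      tailOf n A e = Q) :
    tS n A s c = if s Q then hNb c Q else vNb c Q := by
  subst htc
  obtain ⟨hQint, hrel, hb1, hb2⟩ := cell_data hn hA hout hc
  unfold tS
  rw [if_pos hc, if_pos ⟨hall _ (by unfold hNb; dsimp only; omega)
    (by unfold hNb; dsimp only; omega), hall _ (by unfold vNb; dsimp only; omega)
    (by unfold vNb; dsimp only; omega)⟩]

lemma tS_eval_iff {n : ℕ} (hn : 1 ≤ n) {A : ℤ × ℤ → ℤ × ℤ} (hA : IsArrowField n A)
    (hout : Outward n A) (s : ℤ × ℤ → Bool) {c Q : ℤ × ℤ} (hc : aztecCell (n + 1) c)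
    (htc : tailOf n A c = Q)
    (hiff : ∀ e : ℤ × ℤ, (e.1 = Q.1 ∨ e.1 = Q.1 - 1) → (e.2 = Q.2 ∨ e.2 = Q.2 - 1) →
      (tailOf n A e = Q ↔ ¬ tailOf n A (2 * Q.1 - 1 - e.1, 2 * Q.2 - 1 - e.2) = Q)) :
    tS n A s c = if tailOf n A (hNb c Q) = Q then hNb c Q else vNb c Q := by
  subst htc
  obtain ⟨hQint, hrel, hb1, hb2⟩ := cell_data hn hA hout hc
  unfold tS
  rw [if_pos hc, if_neg ?_]
  rintro ⟨h1, h2⟩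
  have hv := (hiff (hNb c (tailOf n A c)) (by unfold hNb; dsimp only; omega)
    (by unfold hNb; dsimp only; omega)).mp h1
  rw [show ((2 * (tailOf n A c).1 - 1 - (hNb c (tailOf n A c)).1,
      2 * (tailOf n A c).2 - 1 - (hNb c (tailOf n A c)).2) : ℤ × ℤ)
      = vNb c (tailOf n A c) from by
    unfold hNb vNb; rw [Prod.ext_iff]; dsimp only; omega] at hv
  exact hv h2

lemma tS_invol {n : ℕ} (hn : 1 ≤ n) {A : ℤ × ℤ → ℤ × ℤ} (hA : IsArrowField n A)
    (hout : Outward n A) (s : ℤ × ℤ → Bool) {c : ℤ × ℤ} (hc : aztecCell (n + 1) c) :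
    tS n A s (tS n A s c) = c := by
  obtain ⟨hQint, hrel, hb1, hb2⟩ := cell_data hn hA hout hc
  obtain ⟨hd1, hd2⟩ := tS_mem hn hA hout s hc
  have hdb1 : (tS n A s c).1 = (tailOf n A c).1 ∨ (tS n A s c).1 = (tailOf n A c).1 - 1 := by
    rcases hd2 with h | h <;> rw [h] <;> simp only [hNb, vNb, true_and, and_true, true_or, or_true] <;> (try dsimp only) <;> (try omega) <;> trivial
  have hdb2 : (tS n A s c).2 = (tailOf n A c).2 ∨ (tS n A s c).2 = (tailOf n A c).2 - 1 := by
    rcases hd2 with h | h <;> rw [h] <;> simp only [hNb, vNb, true_and, and_true, true_or, or_true] <;> (try dsimp only) <;> (try omega) <;> trivial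
  have hdc : aztecCell (n + 1) (tS n A s c) := nodeCell hQint _ hdb1 hdb2
  have eHH : hNb (hNb c (tailOf n A c)) (tailOf n A c) = c := by
    unfold hNb; rw [Prod.ext_iff]; dsimp only; omega
  have eVV : vNb (vNb c (tailOf n A c)) (tailOf n A c) = c := by
    unfold vNb; rw [Prod.ext_iff]; dsimp only; omega
  have eVH : hNb (vNb c (tailOf n A c)) (tailOf n A c)
      = (2 * (tailOf n A c).1 - 1 - c.1, 2 * (tailOf n A c).2 - 1 - c.2) := by
    unfold hNb vNb; rw [Prod.ext_iff]; dsimp only; omega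
  rcases trichotomy' hA hQint with ⟨_, hall⟩ | hiff | hnone
  · rw [tS_eval hn hA hout s hdc hd1 hall, tS_eval hn hA hout s hc rfl hall]
    by_cases hs : s (tailOf n A c)
    · rw [if_pos hs, if_pos hs, eHH]
    · rw [if_neg hs, if_neg hs, eVV]
  · rw [tS_eval_iff hn hA hout s hdc hd1 hiff]
    have hinner := tS_eval_iff hn hA hout s hc rfl hiff
    by_cases hT : tailOf n A (hNb c (tailOf n A c)) = tailOf n A c
    · rw [if_pos hT] at hinner
      rw [hinner, eHH, if_pos rfl]
    · rw [if_neg hT] at hinner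
      have hoT := (hiff c hb1 hb2).mp rfl
      rw [hinner, eVH, if_neg hoT, eVV]
  · exact absurd rfl (hnone c hb1 hb2)

lemma tS_tiling {n : ℕ} (hn : 1 ≤ n) {A : ℤ × ℤ → ℤ × ℤ} (hA : IsArrowField n A)
    (hout : Outward n A) (s : ℤ × ℤ → Bool) : IsTiling (n + 1) (tS n A s) := by
  constructor
  · intro c hc
    obtain ⟨hQint, hrel, hb1, hb2⟩ := cell_data hn hA hout hc
    obtain ⟨hd1, hd2⟩ := tS_mem hn hA hout s hc
    refine ⟨?_, tS_invol hn hA hout s hc, ?_⟩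
    · refine nodeCell hQint _ ?_ ?_ <;> rcases hd2 with h | h <;> rw [h] <;>
        simp only [hNb, vNb, true_and, and_true, true_or, or_true] <;> (try dsimp only) <;>
        (try omega) <;> trivial
    · rw [adjacent_iff]
      rcases hd2 with h | h <;> rw [h] <;> simp only [hNb, vNb, true_and, and_true, true_or, or_true] <;> (try dsimp only) <;> (try omega) <;> trivial
  · intro c hc; unfold tS; rw [if_neg hc]

lemma tS_arrow {n : ℕ} (hn : 1 ≤ n) {A : ℤ × ℤ → ℤ × ℤ} (hA : IsArrowField n A)
    (hout : Outward n A) (s : ℤ × ℤ → Bool) {c : ℤ × ℤ} (hc : aztecCell (n + 1) c) :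
    tilingArrow n (tS n A s) c = A c := by
  obtain ⟨hQint, hrel, hb1, hb2⟩ := cell_data hn hA hout hc
  have hpar := hQint.1.2
  obtain ⟨hd1, hd2⟩ := tS_mem hn hA hout s hc
  have hQpos : ((tailOf n A c).1 = c.1 ∧ (tailOf n A c).2 = c.2) ∨
      ((tailOf n A c).1 = c.1 + 1 ∧ (tailOf n A c).2 = c.2 + 1) ∨
      ((tailOf n A c).1 = c.1 + 1 ∧ (tailOf n A c).2 = c.2) ∨
      ((tailOf n A c).1 = c.1 ∧ (tailOf n A c).2 = c.2 + 1) := by omega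
  unfold tilingArrow
  by_cases hp : (c.1 + c.2 - (n:ℤ)) % 2 = 0
  · rw [cellDiag_pos_fst (n := n) (c := c) hp, cellDiag_pos_snd (n := n) (c := c) hp]
    have hQpos' : ((tailOf n A c).1 = c.1 ∧ (tailOf n A c).2 = c.2) ∨
        ((tailOf n A c).1 = c.1 + 1 ∧ (tailOf n A c).2 = c.2 + 1) := by omega
    rcases hd2 with hd | hd <;> rw [hd] <;> rcases hQpos' with ⟨e1, e2⟩ | ⟨e1, e2⟩ <;>
      [rw [if_pos (by rw [sqCorner_iff]; unfold hNb; dsimp only; omega)];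
       rw [if_neg (by rw [sqCorner_iff]; unfold hNb; dsimp only; omega)];
       rw [if_pos (by rw [sqCorner_iff]; unfold vNb; dsimp only; omega)];
       rw [if_neg (by rw [sqCorner_iff]; unfold vNb; dsimp only; omega)]] <;>
      rw [hrel, Prod.ext_iff] <;> dsimp only <;> omega
  · rw [cellDiag_neg_fst (n := n) (c := c) hp, cellDiag_neg_snd (n := n) (c := c) hp]
    have hQpos' : ((tailOf n A c).1 = c.1 + 1 ∧ (tailOf n A c).2 = c.2) ∨
        ((tailOf n A c).1 = c.1 ∧ (tailOf n A c).2 = c.2 + 1) := by omega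
    rcases hd2 with hd | hd <;> rw [hd] <;> rcases hQpos' with ⟨e1, e2⟩ | ⟨e1, e2⟩ <;>
      [rw [if_pos (by rw [sqCorner_iff]; unfold hNb; dsimp only; omega)];
       rw [if_neg (by rw [sqCorner_iff]; unfold hNb; dsimp only; omega)];
       rw [if_pos (by rw [sqCorner_iff]; unfold vNb; dsimp only; omega)];
       rw [if_neg (by rw [sqCorner_iff]; unfold vNb; dsimp only; omega)]] <;>
      rw [hrel, Prod.ext_iff] <;> dsimp only <;> omega


lemma tiling_partner {n : ℕ} (hn : 1 ≤ n) {A : ℤ × ℤ → ℤ × ℤ} (hA : IsArrowField n A)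
    (hout : Outward n A) {t : ℤ × ℤ → ℤ × ℤ} (ht : IsTiling (n + 1) t)
    (harr : ∀ c, aztecCell (n + 1) c → tilingArrow n t c = A c) {c : ℤ × ℤ}
    (hc : aztecCell (n + 1) c) :
    t c = hNb c (tailOf n A c) ∨ t c = vNb c (tailOf n A c) := by
  obtain ⟨hQint, hrel, hb1, hb2⟩ := cell_data hn hA hout hc
  obtain ⟨hreg, hinv, hadj⟩ := ht.1 c hc
  have ha := harr c hc
  have hpar := hQint.1.2
  unfold tilingArrow at ha
  rw [adjacent_iff] at hadj
  simp only [hNb, vNb, Prod.ext_iff]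
  by_cases hp : (c.1 + c.2 - (n:ℤ)) % 2 = 0
  · rw [cellDiag_pos_fst (n := n) (c := c) hp, cellDiag_pos_snd (n := n) (c := c) hp] at ha
    by_cases hS : SqCorner (t c) c
    · rw [if_pos hS, hrel] at ha
      rw [sqCorner_iff] at hS
      rw [Prod.ext_iff] at ha
      dsimp only at ha hS ⊢
      omega
    · rw [if_neg hS, hrel] at ha
      rw [sqCorner_iff] at hS
      rw [Prod.ext_iff] at ha
      dsimp only at ha hS ⊢
      omega
  · rw [cellDiag_neg_fst (n := n) (c := c) hp, cellDiag_neg_snd (n := n) (c := c) hp] at ha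
    by_cases hS : SqCorner (t c) (c.1 + 1, c.2)
    · rw [if_pos hS, hrel] at ha
      rw [sqCorner_iff] at hS
      rw [Prod.ext_iff] at ha
      dsimp only at ha hS ⊢
      omega
    · rw [if_neg hS, hrel] at ha
      rw [sqCorner_iff] at hS
      rw [Prod.ext_iff] at ha
      dsimp only at ha hS ⊢
      omega

lemma tiling_tail {n : ℕ} (hn : 1 ≤ n) {A : ℤ × ℤ → ℤ × ℤ} (hA : IsArrowField n A)
    (hout : Outward n A) {t : ℤ × ℤ → ℤ × ℤ} (ht : IsTiling (n + 1) t)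
    (harr : ∀ c, aztecCell (n + 1) c → tilingArrow n t c = A c) {c : ℤ × ℤ}
    (hc : aztecCell (n + 1) c) :
    tailOf n A (t c) = tailOf n A c := by
  obtain ⟨hreg, hinv, hadj⟩ := ht.1 c hc
  have p1 := tiling_partner hn hA hout ht harr hc
  have p2 := tiling_partner hn hA hout ht harr hreg
  rw [hinv] at p2
  obtain ⟨hQint, hrel, hb1, hb2⟩ := cell_data hn hA hout hc
  obtain ⟨hQint', hrel', hb1', hb2'⟩ := cell_data hn hA hout hreg
  have hpar := hQint.1.2
  have hpar' := hQint'.1.2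
  rw [Prod.ext_iff]
  simp only [hNb, vNb, Prod.ext_iff] at p1 p2
  try dsimp only at p1 p2
  omega

lemma rep_pairing_h {n : ℕ} (hn : 1 ≤ n) {A : ℤ × ℤ → ℤ × ℤ} (hA : IsArrowField n A)
    (hout : Outward n A) {t : ℤ × ℤ → ℤ × ℤ} (ht : IsTiling (n + 1) t)
    (harr : ∀ c, aztecCell (n + 1) c → tilingArrow n t c = A c) {Q : ℤ × ℤ}
    (hQ : InteriorNode n Q) (hrep : Repelling A Q)
    (hh : t (Q.1 - 1, Q.2 - 1) = (Q.1, Q.2 - 1)) :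
    ∀ e : ℤ × ℤ, (e.1 = Q.1 ∨ e.1 = Q.1 - 1) → (e.2 = Q.2 ∨ e.2 = Q.2 - 1) →
      t e = hNb e Q := by
  have allT := rep_allT hA hQ hrep
  have hc0 : aztecCell (n + 1) (Q.1 - 1, Q.2 - 1) :=
    nodeCell hQ _ (by (try dsimp only); omega) (by (try dsimp only); omega)
  have hc3 : aztecCell (n + 1) (Q.1 - 1, Q.2) :=
    nodeCell hQ _ (by (try dsimp only); omega) (by (try dsimp only); omega)
  have h1 : t (Q.1, Q.2 - 1) = (Q.1 - 1, Q.2 - 1) := by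
    have := (ht.1 _ hc0).2.1; rw [hh] at this; exact this
  have h3 : t (Q.1 - 1, Q.2) = (Q.1, Q.2) := by
    rcases tiling_partner hn hA hout ht harr hc3 with h | h
    · rw [allT _ (by (try dsimp only); omega) (by (try dsimp only); omega)] at h
      rw [h]; unfold hNb; rw [Prod.ext_iff]; dsimp only; omega
    · rw [allT _ (by (try dsimp only); omega) (by (try dsimp only); omega)] at h
      exfalso
      have hv : t (Q.1 - 1, Q.2) = (Q.1 - 1, Q.2 - 1) := by
        rw [h]; unfold vNb; rw [Prod.ext_iff]; dsimp only; omega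
      have := (ht.1 _ hc3).2.1
      rw [hv, hh] at this
      rw [Prod.ext_iff] at this; dsimp only at this; omega
  have h2 : t (Q.1, Q.2) = (Q.1 - 1, Q.2) := by
    have := (ht.1 _ hc3).2.1; rw [h3] at this; exact this
  rintro ⟨x, y⟩ (rfl | rfl) (rfl | rfl)
  · rw [h2]; unfold hNb; rw [Prod.ext_iff]; dsimp only; omega
  · rw [h1]; unfold hNb; rw [Prod.ext_iff]; dsimp only; omega
  · rw [h3]; unfold hNb; rw [Prod.ext_iff]; dsimp only; omega
  · rw [hh]; unfold hNb; rw [Prod.ext_iff]; dsimp only; omega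

lemma rep_pairing_v {n : ℕ} (hn : 1 ≤ n) {A : ℤ × ℤ → ℤ × ℤ} (hA : IsArrowField n A)
    (hout : Outward n A) {t : ℤ × ℤ → ℤ × ℤ} (ht : IsTiling (n + 1) t)
    (harr : ∀ c, aztecCell (n + 1) c → tilingArrow n t c = A c) {Q : ℤ × ℤ}
    (hQ : InteriorNode n Q) (hrep : Repelling A Q)
    (hh : t (Q.1 - 1, Q.2 - 1) = (Q.1 - 1, Q.2)) :
    ∀ e : ℤ × ℤ, (e.1 = Q.1 ∨ e.1 = Q.1 - 1) → (e.2 = Q.2 ∨ e.2 = Q.2 - 1) →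
      t e = vNb e Q := by
  have allT := rep_allT hA hQ hrep
  have hc0 : aztecCell (n + 1) (Q.1 - 1, Q.2 - 1) :=
    nodeCell hQ _ (by (try dsimp only); omega) (by (try dsimp only); omega)
  have hc1 : aztecCell (n + 1) (Q.1, Q.2 - 1) :=
    nodeCell hQ _ (by (try dsimp only); omega) (by (try dsimp only); omega)
  have h3 : t (Q.1 - 1, Q.2) = (Q.1 - 1, Q.2 - 1) := by
    have := (ht.1 _ hc0).2.1; rw [hh] at this; exact this
  have h1 : t (Q.1, Q.2 - 1) = (Q.1, Q.2) := by
    rcases tiling_partner hn hA hout ht harr hc1 with h | h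
    · rw [allT _ (by (try dsimp only); omega) (by (try dsimp only); omega)] at h
      exfalso
      have hv : t (Q.1, Q.2 - 1) = (Q.1 - 1, Q.2 - 1) := by
        rw [h]; unfold hNb; rw [Prod.ext_iff]; dsimp only; omega
      have := (ht.1 _ hc1).2.1
      rw [hv, hh] at this
      rw [Prod.ext_iff] at this; dsimp only at this; omega
    · rw [allT _ (by (try dsimp only); omega) (by (try dsimp only); omega)] at h
      rw [h]; unfold vNb; rw [Prod.ext_iff]; dsimp only; omega
  have h2 : t (Q.1, Q.2) = (Q.1, Q.2 - 1) := by
    have := (ht.1 _ hc1).2.1; rw [h1] at this; exact this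
  rintro ⟨x, y⟩ (rfl | rfl) (rfl | rfl)
  · rw [h2]; unfold vNb; rw [Prod.ext_iff]; dsimp only; omega
  · rw [h1]; unfold vNb; rw [Prod.ext_iff]; dsimp only; omega
  · rw [h3]; unfold vNb; rw [Prod.ext_iff]; dsimp only; omega
  · rw [hh]; unfold vNb; rw [Prod.ext_iff]; dsimp only; omega

/-- Given an outward pointing field of arrows `A` on `A_{n+1}`, there are exactly
`2 ^ r(A)` domino tilings of `A_{n+1}` whose associated field of arrows equals `A`. -/
theorem tilings_with_outward_field (n : ℕ) (hn : 1 ≤ n) (A : ℤ × ℤ → ℤ × ℤ)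
    (hA : IsArrowField n A) (hout : Outward n A) :
    Nat.card {t : ℤ × ℤ → ℤ × ℤ // IsTiling (n + 1) t ∧
        ∀ c, aztecCell (n + 1) c → tilingArrow n t c = A c} = 2 ^ repCount n A := by
  classical
  set S : Set (ℤ × ℤ) := {N : ℤ × ℤ | InteriorNode n N ∧ Repelling A N} with hSdef
  have hSfin : S.Finite := by
    apply Set.Finite.subset ((Set.finite_Icc (-(n:ℤ)) (n:ℤ)).prod (Set.finite_Icc (-(n:ℤ)) (n:ℤ)))
    rintro ⟨a, b⟩ ⟨⟨⟨_, _⟩, hq⟩, _⟩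
    rw [aztecPoint_iff] at hq
    simp only [Set.mem_prod, Set.mem_Icc]
    dsimp only at hq ⊢
    omega
  haveI : Finite ↥S := hSfin.to_subtype
  set ext : (↥S → Bool) → (ℤ × ℤ → Bool) :=
    fun σ Q => if h : Q ∈ S then σ ⟨Q, h⟩ else false with hextdef
  set Φ : (↥S → Bool) → {t : ℤ × ℤ → ℤ × ℤ // IsTiling (n + 1) t ∧
      ∀ c, aztecCell (n + 1) c → tilingArrow n t c = A c} :=
    fun σ => ⟨tS n A (ext σ), tS_tiling hn hA hout _, fun c hc => tS_arrow hn hA hout _ hc⟩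
    with hΦdef
  have hbij : Function.Bijective Φ := by
    constructor
    · intro σ σ' hφ
      funext x
      obtain ⟨Q, hQS⟩ := x
      have hQint : InteriorNode n Q := hQS.1
      have hrep : Repelling A Q := hQS.2
      have hc0 : aztecCell (n + 1) (Q.1 - 1, Q.2 - 1) :=
        nodeCell hQint _ (by (try dsimp only); omega) (by (try dsimp only); omega)
      have allT := rep_allT hA hQint hrep
      have htc0 : tailOf n A (Q.1 - 1, Q.2 - 1) = Q :=
        allT _ (by (try dsimp only); omega) (by (try dsimp only); omega)
      have hval : tS n A (ext σ) (Q.1 - 1, Q.2 - 1) = tS n A (ext σ') (Q.1 - 1, Q.2 - 1) :=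
        congrFun (congrArg Subtype.val hφ) (Q.1 - 1, Q.2 - 1)
      rw [tS_eval hn hA hout (ext σ) hc0 htc0 allT,
        tS_eval hn hA hout (ext σ') hc0 htc0 allT] at hval
      have he : ext σ Q = σ ⟨Q, hQS⟩ := dif_pos hQS
      have he' : ext σ' Q = σ' ⟨Q, hQS⟩ := dif_pos hQS
      rw [he, he'] at hval
      cases hb : σ ⟨Q, hQS⟩ <;> cases hb' : σ' ⟨Q, hQS⟩ <;> rw [hb, hb'] at hval <;>
        first
          | rfl
          | (exfalso; simp only [Bool.false_eq_true, if_true, if_false, Bool.true_eq_false,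
              if_neg, if_pos] at hval;
             simp only [hNb, vNb, Prod.ext_iff] at hval; (try dsimp only at hval); omega)
    · rintro ⟨t, ht, harr⟩
      refine ⟨fun x => decide (t (x.1.1 - 1, x.1.2 - 1) = (x.1.1, x.1.2 - 1)), ?_⟩
      apply Subtype.ext
      show tS n A _ = t
      funext c
      by_cases hc : aztecCell (n + 1) c
      · obtain ⟨hQint, hrel, hb1, hb2⟩ := cell_data hn hA hout hc
        have p1 := tiling_partner hn hA hout ht harr hc
        rcases trichotomy' hA hQint with ⟨hrep, hall⟩ | hiff | hnone
        · have hQS : tailOf n A c ∈ S := ⟨hQint, hrep⟩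
          rw [tS_eval hn hA hout _ hc rfl hall]
          have he : ext (fun x => decide (t (x.1.1 - 1, x.1.2 - 1) = (x.1.1, x.1.2 - 1)))
              (tailOf n A c)
              = decide (t ((tailOf n A c).1 - 1, (tailOf n A c).2 - 1)
                = ((tailOf n A c).1, (tailOf n A c).2 - 1)) := dif_pos hQS
          rw [he]
          by_cases hd : t ((tailOf n A c).1 - 1, (tailOf n A c).2 - 1)
              = ((tailOf n A c).1, (tailOf n A c).2 - 1)
          · rw [if_pos (decide_eq_true hd)]
            exact (rep_pairing_h hn hA hout ht harr hQint hrep hd c hb1 hb2).symm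
          · rw [if_neg (fun h => hd (of_decide_eq_true h))]
            have hc0 : aztecCell (n + 1) ((tailOf n A c).1 - 1, (tailOf n A c).2 - 1) :=
              nodeCell hQint _ (by (try dsimp only); omega) (by (try dsimp only); omega)
            have p1c0 := tiling_partner hn hA hout ht harr hc0
            rw [hall ((tailOf n A c).1 - 1, (tailOf n A c).2 - 1)
              (by (try dsimp only); omega) (by (try dsimp only); omega)] at p1c0
            rw [show hNb ((tailOf n A c).1 - 1, (tailOf n A c).2 - 1) (tailOf n A c)
                = ((tailOf n A c).1, (tailOf n A c).2 - 1) from by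
              unfold hNb; rw [Prod.ext_iff]; dsimp only; omega] at p1c0
            rw [show vNb ((tailOf n A c).1 - 1, (tailOf n A c).2 - 1) (tailOf n A c)
                = ((tailOf n A c).1 - 1, (tailOf n A c).2) from by
              unfold vNb; rw [Prod.ext_iff]; dsimp only; omega] at p1c0
            rcases p1c0 with h | h
            · exact absurd h hd
            · exact (rep_pairing_v hn hA hout ht harr hQint hrep h c hb1 hb2).symm
        · rw [tS_eval_iff hn hA hout _ hc rfl hiff]
          by_cases hT : tailOf n A (hNb c (tailOf n A c)) = tailOf n A c
          · rw [if_pos hT]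
            rcases p1 with h | h
            · exact h.symm
            · exfalso
              have htl := tiling_tail hn hA hout ht harr hc
              rw [h] at htl
              have hx := (hiff (vNb c (tailOf n A c)) (by unfold vNb; dsimp only; omega)
                (by unfold vNb; dsimp only; omega)).mp htl
              rw [show ((2 * (tailOf n A c).1 - 1 - (vNb c (tailOf n A c)).1,
                  2 * (tailOf n A c).2 - 1 - (vNb c (tailOf n A c)).2) : ℤ × ℤ)
                  = hNb c (tailOf n A c) from by
                unfold hNb vNb; rw [Prod.ext_iff]; dsimp only; omega] at hx
              exact hx hT
          · rw [if_neg hT]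
            rcases p1 with h | h
            · exfalso
              have htl := tiling_tail hn hA hout ht harr hc
              rw [h] at htl
              exact hT htl
            · exact h.symm
        · exact absurd rfl (hnone c hb1 hb2)
      · unfold tS
        rw [if_neg hc]
        exact (ht.2 c hc).symm
  have hcard := Nat.card_eq_of_bijective Φ hbij
  rw [← hcard, Nat.card_fun, Nat.card_eq_fintype_card (α := Bool), Fintype.card_bool]
  unfold repCount
  rw [← hSdef]
  rw [Nat.card_coe_set_eq S]
end

section
/- For every domino tiling T of A_{n+1}, the associated collection of arrows F(T) is a valid outward pointing field of arrows: every interior node is attracting, repelling, or transient, and all arrows in boundary squares point outward. -/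
lemma aux_adj (p1 p2 q1 q2 r1 r2 s1 s2 : ℤ) {c1 c2 : ℤ} {d : ℤ × ℤ}
    (h : Adjacent (c1, c2) d)
    (h1 : p1 = c1 ∧ p2 = c2 - 1) (h2 : q1 = c1 ∧ q2 = c2 + 1)
    (h3 : r1 = c1 - 1 ∧ r2 = c2) (h4 : s1 = c1 + 1 ∧ s2 = c2) :
    d = (p1, p2) ∨ d = (q1, q2) ∨ d = (r1, r2) ∨ d = (s1, s2) := by
  obtain ⟨d1, d2⟩ := d
  simp only [Adjacent, Prod.mk.injEq] at *
  rcases h with ⟨e1, e2⟩ | ⟨e1, e2⟩ <;>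
    rw [abs_eq (by norm_num : (0:ℤ) ≤ 1)] at e2 <;> omega

lemma aux_sq {c1 c2 p1 p2 : ℤ} (h1 : p1 = c1 ∨ p1 = c1 + 1) (h2 : p2 = c2 ∨ p2 = c2 + 1) :
    SqCorner (c1, c2) (p1, p2) := ⟨h1, h2⟩

lemma aux_nsq {c1 c2 p1 p2 : ℤ} (h : ¬ ((p1 = c1 ∨ p1 = c1 + 1) ∧ (p2 = c2 ∨ p2 = c2 + 1))) :
    ¬ SqCorner (c1, c2) (p1, p2) := h

lemma cellDiag_even (n : ℕ) (x y : ℤ) (h : (x + y - (n:ℤ)) % 2 = 0) :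
    cellDiag n (x, y) = ((x, y), (x + 1, y + 1)) := by
  simp [cellDiag, h]

lemma cellDiag_odd (n : ℕ) (x y : ℤ) (h : ¬ ((x + y - (n:ℤ)) % 2 = 0)) :
    cellDiag n (x, y) = ((x + 1, y), (x, y + 1)) := by
  simp [cellDiag, h]

lemma arrow_even_pos (n : ℕ) (t : ℤ × ℤ → ℤ × ℤ) {x y : ℤ} (hp : (x + y - (n:ℤ)) % 2 = 0)
    {d : ℤ × ℤ} (hd : t (x, y) = d) (h : SqCorner d (x, y)) :
    tilingArrow n t (x, y) = (x + 1, y + 1) := by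
  simp only [tilingArrow, hd, cellDiag_even n x y hp]
  exact if_pos h

lemma arrow_even_neg (n : ℕ) (t : ℤ × ℤ → ℤ × ℤ) {x y : ℤ} (hp : (x + y - (n:ℤ)) % 2 = 0)
    {d : ℤ × ℤ} (hd : t (x, y) = d) (h : ¬ SqCorner d (x, y)) :
    tilingArrow n t (x, y) = (x, y) := by
  simp only [tilingArrow, hd, cellDiag_even n x y hp]
  exact if_neg h

lemma arrow_odd_pos (n : ℕ) (t : ℤ × ℤ → ℤ × ℤ) {x y : ℤ} (hp : ¬ ((x + y - (n:ℤ)) % 2 = 0))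
    {d : ℤ × ℤ} (hd : t (x, y) = d) (h : SqCorner d (x + 1, y)) :
    tilingArrow n t (x, y) = (x, y + 1) := by
  simp only [tilingArrow, hd, cellDiag_odd n x y hp]
  exact if_pos h

lemma arrow_odd_neg (n : ℕ) (t : ℤ × ℤ → ℤ × ℤ) {x y : ℤ} (hp : ¬ ((x + y - (n:ℤ)) % 2 = 0))
    {d : ℤ × ℤ} (hd : t (x, y) = d) (h : ¬ SqCorner d (x + 1, y)) :
    tilingArrow n t (x, y) = (x + 1, y) := by
  simp only [tilingArrow, hd, cellDiag_odd n x y hp]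
  exact if_neg h

lemma cell_mem (n : ℕ) {a b : ℤ} (hp : (a + b - (n:ℤ)) % 2 = 0)
    (h : max (|a| - 1) 0 + max (|b| - 1) 0 < (n:ℤ)) (x y : ℤ)
    (hx : x = a - 1 ∨ x = a) (hy : y = b - 1 ∨ y = b) :
    aztecCell (n + 1) (x, y) := by
  rw [abs_eq_max_neg, abs_eq_max_neg] at h
  show max x (-x - 1) + max y (-y - 1) < ((n + 1 : ℕ) : ℤ)
  push_cast
  simp only [max_def] at h ⊢
  split_ifs at h ⊢ <;> omega

lemma finisher {A : ℤ × ℤ → ℤ × ℤ} {a b : ℤ} {P00 P10 P01 P11 : ℤ × ℤ}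
    (h00 : A (a - 1, b - 1) = P00) (h10 : A (a, b - 1) = P10)
    (h01 : A (a - 1, b) = P01) (h11 : A (a, b) = P11)
    (h : (P00 = (a, b) ∧ P10 = (a, b) ∧ P01 = (a, b) ∧ P11 = (a, b)) ∨
         (P00 = (a - 1, b - 1) ∧ P10 = (a + 1, b - 1) ∧ P01 = (a - 1, b + 1) ∧
           P11 = (a + 1, b + 1)) ∨
         ((P00 = (a, b) ↔ P11 = (a + 1, b + 1)) ∧ (P10 = (a, b) ↔ P01 = (a - 1, b + 1)))) :
    Attracting A (a, b) ∨ Repelling A (a, b) ∨ Transient A (a, b) := by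
  rcases h with ⟨e1, e2, e3, e4⟩ | ⟨e1, e2, e3, e4⟩ | ⟨e1, e2⟩
  · exact Or.inl ⟨h00.trans e1, h10.trans e2, h01.trans e3, h11.trans e4⟩
  · exact Or.inr (Or.inl ⟨h00.trans e1, h10.trans e2, h01.trans e3, h11.trans e4⟩)
  · refine Or.inr (Or.inr ⟨?_, ?_⟩)
    · show A (a - 1, b - 1) = (a, b) ↔ A (a, b) = (a + 1, b + 1)
      rw [h00, h11]; exact e1
    · show A (a, b - 1) = (a, b) ↔ A (a - 1, b) = (a - 1, b + 1)
      rw [h10, h01]; exact e2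
set_option maxHeartbeats 2000000 in
/-- For every domino tiling `t` of `A_{n+1}`, the associated collection of arrows is a
valid outward pointing field of arrows. -/
theorem tilingArrow_is_outward_field (n : ℕ) (hn : 1 ≤ n) (t : ℤ × ℤ → ℤ × ℤ)
    (ht : IsTiling (n + 1) t) :
    IsArrowField n (tilingArrow n t) ∧ Outward n (tilingArrow n t) := by
  obtain ⟨ht1, ht2⟩ := ht
  refine ⟨⟨?_, ?_⟩, ?_⟩
  · intro c _
    unfold tilingArrow
    split_ifs with h
    exacts [Or.inr rfl, Or.inl rfl]
  · -- interior nodes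
    rintro ⟨a, b⟩ ⟨⟨-, hp⟩, hin⟩
    have hp' : (a + b - (n:ℤ)) % 2 = 0 := hp
    have hin' : max (|a| - 1) 0 + max (|b| - 1) 0 < (n:ℤ) := hin
    have p00 : ((a - 1) + (b - 1) - (n:ℤ)) % 2 = 0 := by omega
    have p11 : (a + b - (n:ℤ)) % 2 = 0 := hp'
    have p10 : ¬ ((a + (b - 1) - (n:ℤ)) % 2 = 0) := by omega
    have p01 : ¬ (((a - 1) + b - (n:ℤ)) % 2 = 0) := by omega
    obtain ⟨-, i00, j00⟩ := ht1 _ (cell_mem n hp' hin' (a-1) (b-1) (Or.inl rfl) (Or.inl rfl))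
    obtain ⟨-, i10, j10⟩ := ht1 _ (cell_mem n hp' hin' a (b-1) (Or.inr rfl) (Or.inl rfl))
    obtain ⟨-, i01, j01⟩ := ht1 _ (cell_mem n hp' hin' (a-1) b (Or.inl rfl) (Or.inr rfl))
    obtain ⟨-, i11, j11⟩ := ht1 _ (cell_mem n hp' hin' a b (Or.inr rfl) (Or.inr rfl))
    have J00 := aux_adj (a-1) (b-2) (a-1) b (a-2) (b-1) a (b-1) j00
      ⟨by omega, by omega⟩ ⟨by omega, by omega⟩ ⟨by omega, by omega⟩ ⟨by omega, by omega⟩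
    have J10 := aux_adj a (b-2) a b (a-1) (b-1) (a+1) (b-1) j10
      ⟨by omega, by omega⟩ ⟨by omega, by omega⟩ ⟨by omega, by omega⟩ ⟨by omega, by omega⟩
    have J01 := aux_adj (a-1) (b-1) (a-1) (b+1) (a-2) b a b j01
      ⟨by omega, by omega⟩ ⟨by omega, by omega⟩ ⟨by omega, by omega⟩ ⟨by omega, by omega⟩
    have J11 := aux_adj a (b-1) a (b+1) (a-1) b (a+1) b j11
      ⟨by omega, by omega⟩ ⟨by omega, by omega⟩ ⟨by omega, by omega⟩ ⟨by omega, by omega⟩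
    clear hp hin j00 j10 j01 j11
    rcases J00 with h00 | h00 | h00 | h00
    · -- t c00 below : A00 toward N
      have hA00 := arrow_even_pos n t p00 h00 (aux_sq (by omega) (by omega))
      rcases J10 with h10 | h10 | h10 | h10
      · -- t c10 below : toward
        have hA10 := arrow_odd_pos n t p10 h10 (aux_sq (by omega) (by omega))
        rcases J01 with h01 | h01 | h01 | h01
        · rw [h01] at i01; rw [h00] at i01; simp only [Prod.mk.injEq] at i01; omega
        · have hA01 := arrow_odd_neg n t p01 h01 (aux_nsq (by omega))
          rcases J11 with h11 | h11 | h11 | h11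
          · rw [h11] at i11; rw [h10] at i11; simp only [Prod.mk.injEq] at i11; omega
          · have hA11 := arrow_even_neg n t p11 h11 (aux_nsq (by omega))
            exact finisher hA00 hA10 hA01 hA11 (by simp [Prod.mk.injEq] <;> omega)
          · rw [h11] at i11; rw [h01] at i11; simp only [Prod.mk.injEq] at i11; omega
          · have hA11 := arrow_even_neg n t p11 h11 (aux_nsq (by omega))
            exact finisher hA00 hA10 hA01 hA11 (by simp [Prod.mk.injEq] <;> omega)
        · have hA01 := arrow_odd_neg n t p01 h01 (aux_nsq (by omega))
          rcases J11 with h11 | h11 | h11 | h11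
          · rw [h11] at i11; rw [h10] at i11; simp only [Prod.mk.injEq] at i11; omega
          · have hA11 := arrow_even_neg n t p11 h11 (aux_nsq (by omega))
            exact finisher hA00 hA10 hA01 hA11 (by simp [Prod.mk.injEq] <;> omega)
          · rw [h11] at i11; rw [h01] at i11; simp only [Prod.mk.injEq] at i11; omega
          · have hA11 := arrow_even_neg n t p11 h11 (aux_nsq (by omega))
            exact finisher hA00 hA10 hA01 hA11 (by simp [Prod.mk.injEq] <;> omega)
        · -- pair 01-11
          have hA01 := arrow_odd_pos n t p01 h01 (aux_sq (by omega) (by omega))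
          rw [h01] at i01
          have hA11 := arrow_even_pos n t p11 i01 (aux_sq (by omega) (by omega))
          exact finisher hA00 hA10 hA01 hA11 (by simp [Prod.mk.injEq] <;> omega)
      · -- pair 10-11
        have hA10 := arrow_odd_neg n t p10 h10 (aux_nsq (by omega))
        rw [h10] at i10
        have hA11 := arrow_even_pos n t p11 i10 (aux_sq (by omega) (by omega))
        rcases J01 with h01 | h01 | h01 | h01
        · rw [h01] at i01; rw [h00] at i01; simp only [Prod.mk.injEq] at i01; omega
        · have hA01 := arrow_odd_neg n t p01 h01 (aux_nsq (by omega))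
          exact finisher hA00 hA10 hA01 hA11 (by simp [Prod.mk.injEq] <;> omega)
        · have hA01 := arrow_odd_neg n t p01 h01 (aux_nsq (by omega))
          exact finisher hA00 hA10 hA01 hA11 (by simp [Prod.mk.injEq] <;> omega)
        · rw [h01] at i01; rw [i10] at i01; simp only [Prod.mk.injEq] at i01; omega
      · -- t c10 = c00 : contra
        rw [h10] at i10; rw [h00] at i10; simp only [Prod.mk.injEq] at i10; omega
      · -- t c10 right : toward
        have hA10 := arrow_odd_pos n t p10 h10 (aux_sq (by omega) (by omega))
        rcases J01 with h01 | h01 | h01 | h01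
        · rw [h01] at i01; rw [h00] at i01; simp only [Prod.mk.injEq] at i01; omega
        · have hA01 := arrow_odd_neg n t p01 h01 (aux_nsq (by omega))
          rcases J11 with h11 | h11 | h11 | h11
          · rw [h11] at i11; rw [h10] at i11; simp only [Prod.mk.injEq] at i11; omega
          · have hA11 := arrow_even_neg n t p11 h11 (aux_nsq (by omega))
            exact finisher hA00 hA10 hA01 hA11 (by simp [Prod.mk.injEq] <;> omega)
          · rw [h11] at i11; rw [h01] at i11; simp only [Prod.mk.injEq] at i11; omega
          · have hA11 := arrow_even_neg n t p11 h11 (aux_nsq (by omega))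
            exact finisher hA00 hA10 hA01 hA11 (by simp [Prod.mk.injEq] <;> omega)
        · have hA01 := arrow_odd_neg n t p01 h01 (aux_nsq (by omega))
          rcases J11 with h11 | h11 | h11 | h11
          · rw [h11] at i11; rw [h10] at i11; simp only [Prod.mk.injEq] at i11; omega
          · have hA11 := arrow_even_neg n t p11 h11 (aux_nsq (by omega))
            exact finisher hA00 hA10 hA01 hA11 (by simp [Prod.mk.injEq] <;> omega)
          · rw [h11] at i11; rw [h01] at i11; simp only [Prod.mk.injEq] at i11; omega
          · have hA11 := arrow_even_neg n t p11 h11 (aux_nsq (by omega))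
            exact finisher hA00 hA10 hA01 hA11 (by simp [Prod.mk.injEq] <;> omega)
        · -- pair 01-11
          have hA01 := arrow_odd_pos n t p01 h01 (aux_sq (by omega) (by omega))
          rw [h01] at i01
          have hA11 := arrow_even_pos n t p11 i01 (aux_sq (by omega) (by omega))
          exact finisher hA00 hA10 hA01 hA11 (by simp [Prod.mk.injEq] <;> omega)
    · -- pair 00-01
      have hA00 := arrow_even_neg n t p00 h00 (aux_nsq (by omega))
      rw [h00] at i00
      have hA01 := arrow_odd_pos n t p01 i00 (aux_sq (by omega) (by omega))
      rcases J10 with h10 | h10 | h10 | h10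
      · have hA10 := arrow_odd_pos n t p10 h10 (aux_sq (by omega) (by omega))
        rcases J11 with h11 | h11 | h11 | h11
        · rw [h11] at i11; rw [h10] at i11; simp only [Prod.mk.injEq] at i11; omega
        · have hA11 := arrow_even_neg n t p11 h11 (aux_nsq (by omega))
          exact finisher hA00 hA10 hA01 hA11 (by simp [Prod.mk.injEq] <;> omega)
        · rw [h11] at i11; rw [i00] at i11; simp only [Prod.mk.injEq] at i11; omega
        · have hA11 := arrow_even_neg n t p11 h11 (aux_nsq (by omega))
          exact finisher hA00 hA10 hA01 hA11 (by simp [Prod.mk.injEq] <;> omega)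
      · -- pair 10-11
        have hA10 := arrow_odd_neg n t p10 h10 (aux_nsq (by omega))
        rw [h10] at i10
        have hA11 := arrow_even_pos n t p11 i10 (aux_sq (by omega) (by omega))
        exact finisher hA00 hA10 hA01 hA11 (by simp [Prod.mk.injEq] <;> omega)
      · -- t c10 = c00 contra with h00
        rw [h10] at i10; rw [h00] at i10; simp only [Prod.mk.injEq] at i10; omega
      · have hA10 := arrow_odd_pos n t p10 h10 (aux_sq (by omega) (by omega))
        rcases J11 with h11 | h11 | h11 | h11
        · rw [h11] at i11; rw [h10] at i11; simp only [Prod.mk.injEq] at i11; omega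
        · have hA11 := arrow_even_neg n t p11 h11 (aux_nsq (by omega))
          exact finisher hA00 hA10 hA01 hA11 (by simp [Prod.mk.injEq] <;> omega)
        · rw [h11] at i11; rw [i00] at i11; simp only [Prod.mk.injEq] at i11; omega
        · have hA11 := arrow_even_neg n t p11 h11 (aux_nsq (by omega))
          exact finisher hA00 hA10 hA01 hA11 (by simp [Prod.mk.injEq] <;> omega)
    · -- t c00 left : toward
      have hA00 := arrow_even_pos n t p00 h00 (aux_sq (by omega) (by omega))
      rcases J10 with h10 | h10 | h10 | h10
      · have hA10 := arrow_odd_pos n t p10 h10 (aux_sq (by omega) (by omega))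
        rcases J01 with h01 | h01 | h01 | h01
        · rw [h01] at i01; rw [h00] at i01; simp only [Prod.mk.injEq] at i01; omega
        · have hA01 := arrow_odd_neg n t p01 h01 (aux_nsq (by omega))
          rcases J11 with h11 | h11 | h11 | h11
          · rw [h11] at i11; rw [h10] at i11; simp only [Prod.mk.injEq] at i11; omega
          · have hA11 := arrow_even_neg n t p11 h11 (aux_nsq (by omega))
            exact finisher hA00 hA10 hA01 hA11 (by simp [Prod.mk.injEq] <;> omega)
          · rw [h11] at i11; rw [h01] at i11; simp only [Prod.mk.injEq] at i11; omega
          · have hA11 := arrow_even_neg n t p11 h11 (aux_nsq (by omega))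
            exact finisher hA00 hA10 hA01 hA11 (by simp [Prod.mk.injEq] <;> omega)
        · have hA01 := arrow_odd_neg n t p01 h01 (aux_nsq (by omega))
          rcases J11 with h11 | h11 | h11 | h11
          · rw [h11] at i11; rw [h10] at i11; simp only [Prod.mk.injEq] at i11; omega
          · have hA11 := arrow_even_neg n t p11 h11 (aux_nsq (by omega))
            exact finisher hA00 hA10 hA01 hA11 (by simp [Prod.mk.injEq] <;> omega)
          · rw [h11] at i11; rw [h01] at i11; simp only [Prod.mk.injEq] at i11; omega
          · have hA11 := arrow_even_neg n t p11 h11 (aux_nsq (by omega))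
            exact finisher hA00 hA10 hA01 hA11 (by simp [Prod.mk.injEq] <;> omega)
        · have hA01 := arrow_odd_pos n t p01 h01 (aux_sq (by omega) (by omega))
          rw [h01] at i01
          have hA11 := arrow_even_pos n t p11 i01 (aux_sq (by omega) (by omega))
          exact finisher hA00 hA10 hA01 hA11 (by simp [Prod.mk.injEq] <;> omega)
      · have hA10 := arrow_odd_neg n t p10 h10 (aux_nsq (by omega))
        rw [h10] at i10
        have hA11 := arrow_even_pos n t p11 i10 (aux_sq (by omega) (by omega))
        rcases J01 with h01 | h01 | h01 | h01
        · rw [h01] at i01; rw [h00] at i01; simp only [Prod.mk.injEq] at i01; omega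
        · have hA01 := arrow_odd_neg n t p01 h01 (aux_nsq (by omega))
          exact finisher hA00 hA10 hA01 hA11 (by simp [Prod.mk.injEq] <;> omega)
        · have hA01 := arrow_odd_neg n t p01 h01 (aux_nsq (by omega))
          exact finisher hA00 hA10 hA01 hA11 (by simp [Prod.mk.injEq] <;> omega)
        · rw [h01] at i01; rw [i10] at i01; simp only [Prod.mk.injEq] at i01; omega
      · rw [h10] at i10; rw [h00] at i10; simp only [Prod.mk.injEq] at i10; omega
      · have hA10 := arrow_odd_pos n t p10 h10 (aux_sq (by omega) (by omega))
        rcases J01 with h01 | h01 | h01 | h01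
        · rw [h01] at i01; rw [h00] at i01; simp only [Prod.mk.injEq] at i01; omega
        · have hA01 := arrow_odd_neg n t p01 h01 (aux_nsq (by omega))
          rcases J11 with h11 | h11 | h11 | h11
          · rw [h11] at i11; rw [h10] at i11; simp only [Prod.mk.injEq] at i11; omega
          · have hA11 := arrow_even_neg n t p11 h11 (aux_nsq (by omega))
            exact finisher hA00 hA10 hA01 hA11 (by simp [Prod.mk.injEq] <;> omega)
          · rw [h11] at i11; rw [h01] at i11; simp only [Prod.mk.injEq] at i11; omega
          · have hA11 := arrow_even_neg n t p11 h11 (aux_nsq (by omega))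
            exact finisher hA00 hA10 hA01 hA11 (by simp [Prod.mk.injEq] <;> omega)
        · have hA01 := arrow_odd_neg n t p01 h01 (aux_nsq (by omega))
          rcases J11 with h11 | h11 | h11 | h11
          · rw [h11] at i11; rw [h10] at i11; simp only [Prod.mk.injEq] at i11; omega
          · have hA11 := arrow_even_neg n t p11 h11 (aux_nsq (by omega))
            exact finisher hA00 hA10 hA01 hA11 (by simp [Prod.mk.injEq] <;> omega)
          · rw [h11] at i11; rw [h01] at i11; simp only [Prod.mk.injEq] at i11; omega
          · have hA11 := arrow_even_neg n t p11 h11 (aux_nsq (by omega))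
            exact finisher hA00 hA10 hA01 hA11 (by simp [Prod.mk.injEq] <;> omega)
        · have hA01 := arrow_odd_pos n t p01 h01 (aux_sq (by omega) (by omega))
          rw [h01] at i01
          have hA11 := arrow_even_pos n t p11 i01 (aux_sq (by omega) (by omega))
          exact finisher hA00 hA10 hA01 hA11 (by simp [Prod.mk.injEq] <;> omega)
    · -- pair 00-10
      have hA00 := arrow_even_neg n t p00 h00 (aux_nsq (by omega))
      rw [h00] at i00
      have hA10 := arrow_odd_neg n t p10 i00 (aux_nsq (by omega))
      rcases J01 with h01 | h01 | h01 | h01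
      · rw [h01] at i01; rw [h00] at i01; simp only [Prod.mk.injEq] at i01; omega
      · have hA01 := arrow_odd_neg n t p01 h01 (aux_nsq (by omega))
        rcases J11 with h11 | h11 | h11 | h11
        · rw [h11] at i11; rw [i00] at i11; simp only [Prod.mk.injEq] at i11; omega
        · have hA11 := arrow_even_neg n t p11 h11 (aux_nsq (by omega))
          exact finisher hA00 hA10 hA01 hA11 (by simp [Prod.mk.injEq] <;> omega)
        · rw [h11] at i11; rw [h01] at i11; simp only [Prod.mk.injEq] at i11; omega
        · have hA11 := arrow_even_neg n t p11 h11 (aux_nsq (by omega))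
          exact finisher hA00 hA10 hA01 hA11 (by simp [Prod.mk.injEq] <;> omega)
      · have hA01 := arrow_odd_neg n t p01 h01 (aux_nsq (by omega))
        rcases J11 with h11 | h11 | h11 | h11
        · rw [h11] at i11; rw [i00] at i11; simp only [Prod.mk.injEq] at i11; omega
        · have hA11 := arrow_even_neg n t p11 h11 (aux_nsq (by omega))
          exact finisher hA00 hA10 hA01 hA11 (by simp [Prod.mk.injEq] <;> omega)
        · rw [h11] at i11; rw [h01] at i11; simp only [Prod.mk.injEq] at i11; omega
        · have hA11 := arrow_even_neg n t p11 h11 (aux_nsq (by omega))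
          exact finisher hA00 hA10 hA01 hA11 (by simp [Prod.mk.injEq] <;> omega)
      · -- pair 01-11
        have hA01 := arrow_odd_pos n t p01 h01 (aux_sq (by omega) (by omega))
        rw [h01] at i01
        have hA11 := arrow_even_pos n t p11 i01 (aux_sq (by omega) (by omega))
        exact finisher hA00 hA10 hA01 hA11 (by simp [Prod.mk.injEq] <;> omega)
  · -- Outward
    rintro ⟨x, y⟩ ⟨hc1, hc2⟩
    obtain ⟨hd1, -, jd⟩ := ht1 _ hc1
    have J := aux_adj x (y-1) x (y+1) (x-1) y (x+1) y jd
      ⟨by omega, by omega⟩ ⟨by omega, by omega⟩ ⟨by omega, by omega⟩ ⟨by omega, by omega⟩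
    rcases J with hd | hd | hd | hd <;> rw [hd] at hd1 <;>
        by_cases hpar : (x + y - (n:ℤ)) % 2 = 0
    · rw [arrow_even_pos n t hpar hd (aux_sq (by omega) (by omega))]
      intro hP
      simp only [aztecPoint, aztecCell, abs_eq_max_neg, max_def, Nat.cast_add,
        Nat.cast_one] at hP hc1 hc2 hd1
      split_ifs at hP hc1 hc2 hd1 <;> omega
    · rw [arrow_odd_pos n t hpar hd (aux_sq (by omega) (by omega))]
      intro hP
      simp only [aztecPoint, aztecCell, abs_eq_max_neg, max_def, Nat.cast_add,
        Nat.cast_one] at hP hc1 hc2 hd1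
      split_ifs at hP hc1 hc2 hd1 <;> omega
    · rw [arrow_even_neg n t hpar hd (aux_nsq (by omega))]
      intro hP
      simp only [aztecPoint, aztecCell, abs_eq_max_neg, max_def, Nat.cast_add,
        Nat.cast_one] at hP hc1 hc2 hd1
      split_ifs at hP hc1 hc2 hd1 <;> omega
    · rw [arrow_odd_neg n t hpar hd (aux_nsq (by omega))]
      intro hP
      simp only [aztecPoint, aztecCell, abs_eq_max_neg, max_def, Nat.cast_add,
        Nat.cast_one] at hP hc1 hc2 hd1
      split_ifs at hP hc1 hc2 hd1 <;> omega
    · rw [arrow_even_pos n t hpar hd (aux_sq (by omega) (by omega))]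
      intro hP
      simp only [aztecPoint, aztecCell, abs_eq_max_neg, max_def, Nat.cast_add,
        Nat.cast_one] at hP hc1 hc2 hd1
      split_ifs at hP hc1 hc2 hd1 <;> omega
    · rw [arrow_odd_neg n t hpar hd (aux_nsq (by omega))]
      intro hP
      simp only [aztecPoint, aztecCell, abs_eq_max_neg, max_def, Nat.cast_add,
        Nat.cast_one] at hP hc1 hc2 hd1
      split_ifs at hP hc1 hc2 hd1 <;> omega
    · rw [arrow_even_neg n t hpar hd (aux_nsq (by omega))]
      intro hP
      simp only [aztecPoint, aztecCell, abs_eq_max_neg, max_def, Nat.cast_add,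
        Nat.cast_one] at hP hc1 hc2 hd1
      split_ifs at hP hc1 hc2 hd1 <;> omega
    · rw [arrow_odd_pos n t hpar hd (aux_sq (by omega) (by omega))]
      intro hP
      simp only [aztecPoint, aztecCell, abs_eq_max_neg, max_def, Nat.cast_add,
        Nat.cast_one] at hP hc1 hc2 hd1
      split_ifs at hP hc1 hc2 hd1 <;> omega
end
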